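/- arXiv:math/0311212 — 14 statements merged into one kernel-verified Lean document; each statement's English description precedes it below -/
import Mathlib

section
/- Let n be a positive integer, a = (a_1,...,a_n) and b = (b_1,...,b_n) be n-tuples of complex numbers with b_k ≠ 0 for all k, and p = (p_1,...,p_n) nonnegative real weights with ∑_{i=1}^n p_i = 1. If there exist α ∈ ℂ and r > 0 such that a_k / conj(b_k) lies in the closed disk D̄(α,r) = {z ∈ ℂ : |z - α| ≤ r} for every k ∈ {1,...,n}, then ∑_{k=1}^n p_k |a_k|^2 + (|α|^2 - r^2) ∑_{k=1}^n p_k |b_k|^2 ≤ 2 Re[ conj(α) · ∑_{k=1}^n p_k a_k b_k ]. -/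
open Complex ComplexConjugate

/-! Dividing by `conj b` turns the disk condition into `‖a - α conj b‖ ≤ r ‖b‖`; squaring and
expanding gives the inequality for a single pair `(a, b)`, and the weighted version is a
nonnegative combination of these. -/

namespace Complex

lemma norm_sub_mul_conj_le_of_norm_div_conj_sub_le {a b α : ℂ} {r : ℝ} (hb : b ≠ 0)
    (h : ‖a / conj b - α‖ ≤ r) : ‖a - α * conj b‖ ≤ r * ‖b‖ := by
  have hb' : conj b ≠ 0 := (map_ne_zero _).mpr hb
  calc ‖a - α * conj b‖ = ‖a / conj b - α‖ * ‖b‖ := by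
        rw [← norm_conj b, ← norm_mul, sub_mul, div_mul_cancel₀ _ hb']
    _ ≤ r * ‖b‖ := by gcongr

lemma sq_norm_sub_mul_conj (a b α : ℂ) :
    ‖a - α * conj b‖ ^ 2 = ‖a‖ ^ 2 - 2 * (conj α * (a * b)).re + ‖α‖ ^ 2 * ‖b‖ ^ 2 := by
  simp only [Complex.sq_norm, normSq_apply, mul_re, mul_im, sub_re, sub_im, conj_re, conj_im]
  ring

lemma sq_norm_add_le_of_norm_div_conj_sub_le {a b α : ℂ} {r : ℝ} (hb : b ≠ 0)
    (h : ‖a / conj b - α‖ ≤ r) :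
    ‖a‖ ^ 2 + (‖α‖ ^ 2 - r ^ 2) * ‖b‖ ^ 2 ≤ 2 * (conj α * (a * b)).re := by
  have hsq : ‖a - α * conj b‖ ^ 2 ≤ (r * ‖b‖) ^ 2 :=
    pow_le_pow_left₀ (norm_nonneg _) (norm_sub_mul_conj_le_of_norm_div_conj_sub_le hb h) 2
  rw [sq_norm_sub_mul_conj] at hsq
  linarith

lemma weighted_sq_norm_add_le_of_norm_div_conj_sub_le {ι : Type*} (s : Finset ι)
    {a b : ι → ℂ} {p : ι → ℝ} {α : ℂ} {r : ℝ} (hb : ∀ k ∈ s, b k ≠ 0)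
    (hp : ∀ k ∈ s, 0 ≤ p k) (h : ∀ k ∈ s, ‖a k / conj (b k) - α‖ ≤ r) :
    ∑ k ∈ s, p k * ‖a k‖ ^ 2 + (‖α‖ ^ 2 - r ^ 2) * ∑ k ∈ s, p k * ‖b k‖ ^ 2
      ≤ 2 * (conj α * ∑ k ∈ s, (p k : ℂ) * a k * b k).re := by
  have hre : 2 * (conj α * ∑ k ∈ s, (p k : ℂ) * a k * b k).re
      = ∑ k ∈ s, p k * (2 * (conj α * (a k * b k)).re) := by
    simp only [Finset.mul_sum, re_sum]
    refine Finset.sum_congr rfl fun k _ => ?_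
    rw [show conj α * ((p k : ℂ) * a k * b k) = p k * (conj α * (a k * b k)) by ring,
      re_ofReal_mul]
    ring
  rw [hre, Finset.mul_sum, ← Finset.sum_add_distrib]
  refine Finset.sum_le_sum fun k hk => ?_
  have := mul_le_mul_of_nonneg_left
    (sq_norm_add_le_of_norm_div_conj_sub_le (hb k hk) (h k hk)) (hp k hk)
  linarith

end Complex

theorem stmt_0_general (n : ℕ) (a b : Fin n → ℂ) (p : Fin n → ℝ)
    (hb : ∀ k, b k ≠ 0) (hp : ∀ k, 0 ≤ p k)
    (α : ℂ) (r : ℝ)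
    (h : ∀ k, ‖a k / (starRingEnd ℂ) (b k) - α‖ ≤ r) :
    ∑ k, p k * ‖a k‖ ^ 2
      + (‖α‖ ^ 2 - r ^ 2) * ∑ k, p k * ‖b k‖ ^ 2
      ≤ 2 * ((starRingEnd ℂ) α * ∑ k, (p k : ℂ) * a k * b k).re :=
  Complex.weighted_sq_norm_add_le_of_norm_div_conj_sub_le Finset.univ
    (fun k _ => hb k) (fun k _ => hp k) (fun k _ => h k)

theorem stmt_0 (n : ℕ) (hn : 0 < n) (a b : Fin n → ℂ) (p : Fin n → ℝ)
    (hb : ∀ k, b k ≠ 0) (hp : ∀ k, 0 ≤ p k) (hp1 : ∑ i, p i = 1)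
    (α : ℂ) (r : ℝ) (hr : 0 < r)
    (h : ∀ k, ‖a k / (starRingEnd ℂ) (b k) - α‖ ≤ r) :
    ∑ k, p k * ‖a k‖ ^ 2
      + (‖α‖ ^ 2 - r ^ 2) * ∑ k, p k * ‖b k‖ ^ 2
      ≤ 2 * ((starRingEnd ℂ) α * ∑ k, (p k : ℂ) * a k * b k).re :=
  stmt_0_general n a b p hb hp α r h
end

section
/- Let n be a positive integer, a = (a_1,...,a_n) and b = (b_1,...,b_n) be n-tuples of complex numbers with b_k ≠ 0 for all k, and p = (p_1,...,p_n) nonnegative real weights with ∑_{i=1}^n p_i = 1. Suppose there exist α ∈ ℂ and r > 0 with |α| > r such that a_k / conj(b_k) ∈ D̄(α,r) for every k ∈ {1,...,n}. Then 0 ≤ (∑_{k=1}^n p_k |a_k|^2)(∑_{k=1}^n p_k |b_k|^2) - | ∑_{k=1}^n p_k a_k b_k |^2 ≤ (r^2/(|α|^2 - r^2)) · | ∑_{k=1}^n p_k a_k b_k |^2. -/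
/-!
Write `A = ∑ pₖ‖aₖ‖²`, `B = ∑ pₖ‖bₖ‖²`, `C = ∑ pₖaₖbₖ`. The lower bound is the weighted
Cauchy–Schwarz inequality. For the upper bound, the disk condition says
`‖aₖ - α conj bₖ‖ ≤ r‖bₖ‖`; squaring and expanding gives
`‖aₖ‖² + (‖α‖² - r²)‖bₖ‖² ≤ 2 Re (conj α aₖ bₖ)`, and averaging with the weights gives
`A + (‖α‖² - r²) B ≤ 2‖α‖‖C‖`. Then AM–GM, `4 (‖α‖² - r²) A B ≤ (A + (‖α‖² - r²) B)²`,
yields `A B ≤ ‖α‖²‖C‖² / (‖α‖² - r²)`, which is the claim.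
-/

open Finset RCLike ComplexConjugate

variable {𝕜 ι : Type*} [RCLike 𝕜]

theorem sq_norm_sum_weight_mul_mul_le (s : Finset ι) {p : ι → ℝ} (hp : ∀ i ∈ s, 0 ≤ p i)
    (a b : ι → 𝕜) :
    ‖∑ i ∈ s, (p i : 𝕜) * a i * b i‖ ^ 2
      ≤ (∑ i ∈ s, p i * ‖a i‖ ^ 2) * ∑ i ∈ s, p i * ‖b i‖ ^ 2 := by
  have hnorm : ‖∑ i ∈ s, (p i : 𝕜) * a i * b i‖ ≤ ∑ i ∈ s, p i * ‖a i‖ * ‖b i‖ := by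
    refine (norm_sum_le _ _).trans_eq (sum_congr rfl fun i hi => ?_)
    rw [norm_mul, norm_mul, norm_ofReal, abs_of_nonneg (hp i hi)]
  calc ‖∑ i ∈ s, (p i : 𝕜) * a i * b i‖ ^ 2 ≤ (∑ i ∈ s, p i * ‖a i‖ * ‖b i‖) ^ 2 := by gcongr
    _ ≤ _ := sum_sq_le_sum_mul_sum_of_sq_le_mul s
        (fun i hi => mul_nonneg (hp i hi) (sq_nonneg _))
        (fun i hi => mul_nonneg (hp i hi) (sq_nonneg _)) fun i _ => le_of_eq (by ring)

theorem norm_sq_add_mul_norm_sq_le_of_norm_div_conj_sub_le {a b α : 𝕜} {r : ℝ} (hb : b ≠ 0)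
    (h : ‖a / conj b - α‖ ≤ r) :
    ‖a‖ ^ 2 + (‖α‖ ^ 2 - r ^ 2) * ‖b‖ ^ 2 ≤ 2 * re (conj α * (a * b)) := by
  have hdist : ‖a - α * conj b‖ ≤ r * ‖b‖ := by
    rw [show a - α * conj b = (a / conj b - α) * conj b by field_simp [hb], norm_mul, norm_conj]
    gcongr
  have hsq : ‖a - α * conj b‖ ^ 2 ≤ r ^ 2 * ‖b‖ ^ 2 := by rw [← mul_pow]; gcongr
  have hexpand : ‖a - α * conj b‖ ^ 2
      = ‖a‖ ^ 2 - 2 * re (conj α * (a * b)) + ‖α‖ ^ 2 * ‖b‖ ^ 2 := by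
    rw [@norm_sub_sq 𝕜, norm_mul, norm_conj, inner_apply, ← conj_re (conj α * (a * b))]
    simp only [map_mul, conj_conj]
    ring_nf
  linarith

theorem sum_norm_sq_add_mul_sum_norm_sq_le (s : Finset ι) {p : ι → ℝ} (hp : ∀ i ∈ s, 0 ≤ p i)
    {a b : ι → 𝕜} (hb : ∀ i ∈ s, b i ≠ 0) {α : 𝕜} {r : ℝ}
    (h : ∀ i ∈ s, ‖a i / conj (b i) - α‖ ≤ r) :
    ∑ i ∈ s, p i * ‖a i‖ ^ 2 + (‖α‖ ^ 2 - r ^ 2) * ∑ i ∈ s, p i * ‖b i‖ ^ 2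
      ≤ 2 * ‖α‖ * ‖∑ i ∈ s, (p i : 𝕜) * a i * b i‖ := by
  calc ∑ i ∈ s, p i * ‖a i‖ ^ 2 + (‖α‖ ^ 2 - r ^ 2) * ∑ i ∈ s, p i * ‖b i‖ ^ 2
      = ∑ i ∈ s, p i * (‖a i‖ ^ 2 + (‖α‖ ^ 2 - r ^ 2) * ‖b i‖ ^ 2) := by
        rw [mul_sum, ← sum_add_distrib]
        exact sum_congr rfl fun i _ => by ring
    _ ≤ ∑ i ∈ s, p i * (2 * re (conj α * (a i * b i))) := by
        gcongr with i hi
        · exact hp i hi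
        · exact norm_sq_add_mul_norm_sq_le_of_norm_div_conj_sub_le (hb i hi) (h i hi)
    _ = 2 * re (conj α * ∑ i ∈ s, (p i : 𝕜) * a i * b i) := by
        rw [mul_sum, map_sum, mul_sum]
        refine sum_congr rfl fun i _ => ?_
        rw [show conj α * ((p i : 𝕜) * a i * b i) = p i * (conj α * (a i * b i)) by ring,
          re_ofReal_mul]
        ring
    _ ≤ 2 * ‖α‖ * ‖∑ i ∈ s, (p i : 𝕜) * a i * b i‖ := by
        rw [mul_assoc, ← norm_conj α, ← norm_mul]
        gcongr
        exact re_le_norm _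

theorem mul_sub_sq_le_of_add_mul_le {A B c s r : ℝ} (hA : 0 ≤ A) (hB : 0 ≤ B)
    (hrs : 0 < s ^ 2 - r ^ 2) (h : A + (s ^ 2 - r ^ 2) * B ≤ 2 * s * c) :
    A * B - c ^ 2 ≤ r ^ 2 / (s ^ 2 - r ^ 2) * c ^ 2 := by
  have hAB : 4 * (s ^ 2 - r ^ 2) * (A * B) ≤ (2 * s * c) ^ 2 := by
    nlinarith [sq_nonneg (A - (s ^ 2 - r ^ 2) * B), mul_nonneg hrs.le hB]
  rw [div_mul_eq_mul_div, le_div_iff₀ hrs]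
  nlinarith

theorem stmt_2_general (n : ℕ) (a b : Fin n → ℂ) (p : Fin n → ℝ)
    (hb : ∀ k, b k ≠ 0) (hp : ∀ k, 0 ≤ p k)
    (α : ℂ) (r : ℝ) (hr : 0 < r) (hαr : r < ‖α‖)
    (h : ∀ k, ‖a k / (starRingEnd ℂ) (b k) - α‖ ≤ r) :
    0 ≤ (∑ k, p k * ‖a k‖ ^ 2) * (∑ k, p k * ‖b k‖ ^ 2)
        - ‖∑ k, (p k : ℂ) * a k * b k‖ ^ 2
    ∧ (∑ k, p k * ‖a k‖ ^ 2) * (∑ k, p k * ‖b k‖ ^ 2)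
        - ‖∑ k, (p k : ℂ) * a k * b k‖ ^ 2
      ≤ (r ^ 2 / (‖α‖ ^ 2 - r ^ 2))
        * ‖∑ k, (p k : ℂ) * a k * b k‖ ^ 2 := by
  have hm : 0 < ‖α‖ ^ 2 - r ^ 2 := by nlinarith
  refine ⟨sub_nonneg.2 (sq_norm_sum_weight_mul_mul_le _ (fun k _ => hp k) a b),
    mul_sub_sq_le_of_add_mul_le (sum_nonneg fun k _ => mul_nonneg (hp k) (sq_nonneg _))
      (sum_nonneg fun k _ => mul_nonneg (hp k) (sq_nonneg _)) hm
      (sum_norm_sq_add_mul_sum_norm_sq_le _ (fun k _ => hp k) (fun k _ => hb k) fun k _ => h k)⟩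

theorem stmt_2 (n : ℕ) (hn : 0 < n) (a b : Fin n → ℂ) (p : Fin n → ℝ)
    (hb : ∀ k, b k ≠ 0) (hp : ∀ k, 0 ≤ p k) (hp1 : ∑ i, p i = 1)
    (α : ℂ) (r : ℝ) (hr : 0 < r) (hαr : r < ‖α‖)
    (h : ∀ k, ‖a k / (starRingEnd ℂ) (b k) - α‖ ≤ r) :
    0 ≤ (∑ k, p k * ‖a k‖ ^ 2) * (∑ k, p k * ‖b k‖ ^ 2)
        - ‖∑ k, (p k : ℂ) * a k * b k‖ ^ 2
    ∧ (∑ k, p k * ‖a k‖ ^ 2) * (∑ k, p k * ‖b k‖ ^ 2)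
        - ‖∑ k, (p k : ℂ) * a k * b k‖ ^ 2
      ≤ (r ^ 2 / (‖α‖ ^ 2 - r ^ 2))
        * ‖∑ k, (p k : ℂ) * a k * b k‖ ^ 2 :=
  stmt_2_general n a b p hb hp α r hr hαr h
end

section
/- Let n be a positive integer, a = (a_1,...,a_n) and b = (b_1,...,b_n) be n-tuples of complex numbers with b_k ≠ 0 for all k, and p = (p_1,...,p_n) nonnegative real weights with ∑_{i=1}^n p_i = 1. Suppose there exist α ∈ ℂ and r > 0 with |α| = r such that a_k / conj(b_k) ∈ D̄(α,r) for every k ∈ {1,...,n}. Then ∑_{k=1}^n p_k |a_k|^2 ≤ 2 Re[ conj(α) · ∑_{k=1}^n p_k a_k b_k ] ≤ 2 |α| · | ∑_{k=1}^n p_k a_k b_k |. -/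
/-!
Writing `z = a / conj b`, the condition `|z - α| ≤ |α|` expands to `|z|² ≤ 2 Re (conj α · z)`:
the closed disk `D̄(α, |α|)` passes through the origin. Multiplying by `|b|²` turns this into
`|a|² ≤ 2 Re (conj α · a b)`, since `a b = z |b|²`; summing with nonnegative weights gives the
first inequality, and the second is `Re w ≤ |w|`.
-/

open Complex ComplexConjugate

namespace Complex

theorem sq_norm_le_two_mul_re_conj_mul_of_norm_sub_le {z α : ℂ} (h : ‖z - α‖ ≤ ‖α‖) :
    ‖z‖ ^ 2 ≤ 2 * (conj α * z).re := by
  have hsq : ‖z - α‖ ^ 2 ≤ ‖α‖ ^ 2 := pow_le_pow_left₀ (norm_nonneg _) h 2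
  rw [Complex.sq_norm, Complex.sq_norm, normSq_sub] at hsq
  rw [Complex.sq_norm, mul_comm (conj α)]
  linarith

theorem sq_norm_le_two_mul_re_conj_mul_mul_of_norm_div_conj_sub_le {a b α : ℂ} (hb : b ≠ 0)
    (h : ‖a / conj b - α‖ ≤ ‖α‖) :
    ‖a‖ ^ 2 ≤ 2 * (conj α * (a * b)).re := by
  set z := a / conj b
  have ha : a = z * conj b := (div_mul_cancel₀ a ((map_ne_zero _).mpr hb)).symm
  have hab : a * b = z * (‖b‖ ^ 2 : ℝ) := by
    rw [ha, mul_assoc, mul_comm (conj b), mul_conj, normSq_eq_norm_sq]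
  have hz := sq_norm_le_two_mul_re_conj_mul_of_norm_sub_le h
  rw [hab, ← mul_assoc, re_mul_ofReal, ha, norm_mul, norm_conj, mul_pow]
  nlinarith [sq_nonneg ‖b‖]

theorem sum_mul_sq_norm_le_two_mul_re_conj_mul_sum {ι : Type*} (s : Finset ι) {a b : ι → ℂ}
    {p : ι → ℝ} {α : ℂ} (hb : ∀ k ∈ s, b k ≠ 0) (hp : ∀ k ∈ s, 0 ≤ p k)
    (h : ∀ k ∈ s, ‖a k / conj (b k) - α‖ ≤ ‖α‖) :
    ∑ k ∈ s, p k * ‖a k‖ ^ 2 ≤ 2 * (conj α * ∑ k ∈ s, (p k : ℂ) * a k * b k).re := by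
  have hterm : ∀ k, (conj α * ((p k : ℂ) * a k * b k)).re = p k * (conj α * (a k * b k)).re :=
    fun k => by rw [← re_ofReal_mul]; ring_nf
  simp only [Finset.mul_sum, re_sum, hterm]
  refine Finset.sum_le_sum fun k hk => ?_
  have := sq_norm_le_two_mul_re_conj_mul_mul_of_norm_div_conj_sub_le (hb k hk) (h k hk)
  nlinarith [hp k hk]

end Complex

theorem stmt_3_general (n : ℕ) (a b : Fin n → ℂ) (p : Fin n → ℝ)
    (hb : ∀ k, b k ≠ 0) (hp : ∀ k, 0 ≤ p k)
    (α : ℂ) (r : ℝ) (hαr : ‖α‖ = r)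
    (h : ∀ k, ‖a k / (starRingEnd ℂ) (b k) - α‖ ≤ r) :
    ∑ k, p k * ‖a k‖ ^ 2
      ≤ 2 * ((starRingEnd ℂ) α * ∑ k, (p k : ℂ) * a k * b k).re
    ∧ 2 * ((starRingEnd ℂ) α * ∑ k, (p k : ℂ) * a k * b k).re
      ≤ 2 * ‖α‖ * ‖∑ k, (p k : ℂ) * a k * b k‖ := by
  subst hαr
  refine ⟨Complex.sum_mul_sq_norm_le_two_mul_re_conj_mul_sum _ (fun k _ => hb k)
    (fun k _ => hp k) (fun k _ => h k), ?_⟩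
  have := re_le_norm (conj α * ∑ k, (p k : ℂ) * a k * b k)
  rw [norm_mul, norm_conj] at this
  linarith

theorem stmt_3 (n : ℕ) (hn : 0 < n) (a b : Fin n → ℂ) (p : Fin n → ℝ)
    (hb : ∀ k, b k ≠ 0) (hp : ∀ k, 0 ≤ p k) (hp1 : ∑ i, p i = 1)
    (α : ℂ) (r : ℝ) (hr : 0 < r) (hαr : ‖α‖ = r)
    (h : ∀ k, ‖a k / (starRingEnd ℂ) (b k) - α‖ ≤ r) :
    ∑ k, p k * ‖a k‖ ^ 2
      ≤ 2 * ((starRingEnd ℂ) α * ∑ k, (p k : ℂ) * a k * b k).re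
    ∧ 2 * ((starRingEnd ℂ) α * ∑ k, (p k : ℂ) * a k * b k).re
      ≤ 2 * ‖α‖ * ‖∑ k, (p k : ℂ) * a k * b k‖ :=
  stmt_3_general n a b p hb hp α r hαr h
end

section
/- Let n be a positive integer, a = (a_1,...,a_n) and b = (b_1,...,b_n) be n-tuples of complex numbers with b_k ≠ 0 for all k, and p = (p_1,...,p_n) nonnegative real weights with ∑_{i=1}^n p_i = 1. Suppose there exist α ∈ ℂ with α ≠ 0 and r > 0 such that a_k / conj(b_k) ∈ D̄(α,r) for every k ∈ {1,...,n}. Then 0 ≤ (∑_{k=1}^n p_k |a_k|^2)^{1/2} (∑_{k=1}^n p_k |b_k|^2)^{1/2} - | ∑_{k=1}^n p_k a_k b_k | ≤ (∑_{k=1}^n p_k |a_k|^2)^{1/2} (∑_{k=1}^n p_k |b_k|^2)^{1/2} - Re[ (conj(α)/|α|) · ∑_{k=1}^n p_k a_k b_k ] ≤ (1/2) · (r^2/|α|) · ∑_{k=1}^n p_k |b_k|^2. -/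
/-!
Since `a k / conj (b k)` lies in the disk, `‖a k - α * conj (b k)‖ ≤ r * ‖b k‖`. Squaring, expanding
and averaging with the weights gives `A + ‖α‖² B - 2 Re (conj α * S) ≤ r² B`, where `A`, `B` are the
weighted sums of `‖a k‖²`, `‖b k‖²` and `S = ∑ p k * a k * b k`; combined with
`2 ‖α‖ √A √B ≤ A + ‖α‖² B` (AM-GM) this is the last inequality. The first two are Cauchy–Schwarz
and `Re z ≤ ‖z‖` for the unimodular factor `conj α / ‖α‖`.
-/

open Finset ComplexConjugate

namespace Complex

theorem norm_sub_mul_conj_sq (x y α : ℂ) :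
    ‖x - α * conj y‖ ^ 2 = ‖x‖ ^ 2 + ‖α‖ ^ 2 * ‖y‖ ^ 2 - 2 * (conj α * (x * y)).re := by
  simp only [Complex.sq_norm, normSq_sub, map_mul, conj_conj, normSq_conj]
  ring_nf

theorem norm_sub_mul_conj_eq {y : ℂ} (hy : y ≠ 0) (x α : ℂ) :
    ‖x - α * conj y‖ = ‖x / conj y - α‖ * ‖y‖ := by
  rw [← norm_conj y, ← norm_mul, sub_mul, div_mul_cancel₀ _ ((map_ne_zero _).2 hy)]

theorem re_div_norm_mul (α z : ℂ) : (conj α / ‖α‖ * z).re = (conj α * z).re / ‖α‖ := by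
  rw [div_mul_eq_mul_div, div_ofReal_re]

theorem norm_conj_div_norm {α : ℂ} (hα : α ≠ 0) : ‖conj α / ‖α‖‖ = 1 := by
  rw [norm_div, norm_conj, norm_real, norm_norm, div_self (norm_ne_zero_iff.2 hα)]

variable {ι : Type*} [Fintype ι] {p : ι → ℝ} (a b : ι → ℂ)

theorem norm_weighted_sum_mul_le_sqrt_mul_sqrt (hp : ∀ k, 0 ≤ p k) :
    ‖∑ k, (p k : ℂ) * a k * b k‖ ≤ √(∑ k, p k * ‖a k‖ ^ 2) * √(∑ k, p k * ‖b k‖ ^ 2) := by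
  rw [← Real.sqrt_mul (sum_nonneg fun k _ => mul_nonneg (hp k) (sq_nonneg _))]
  calc ‖∑ k, (p k : ℂ) * a k * b k‖ ≤ ∑ k, p k * ‖a k‖ * ‖b k‖ := by
        refine (norm_sum_le _ _).trans_eq (sum_congr rfl fun k _ => ?_)
        rw [norm_mul, norm_mul, norm_real, Real.norm_of_nonneg (hp k)]
    _ ≤ _ := Real.le_sqrt_of_sq_le <| sum_sq_le_sum_mul_sum_of_sq_le_mul _
        (fun k _ => mul_nonneg (hp k) (sq_nonneg _)) (fun k _ => mul_nonneg (hp k) (sq_nonneg _))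
        fun k _ => le_of_eq (by ring)

theorem sum_weighted_norm_sub_mul_conj_sq (α : ℂ) :
    ∑ k, p k * ‖a k - α * conj (b k)‖ ^ 2 = ∑ k, p k * ‖a k‖ ^ 2
      + ‖α‖ ^ 2 * ∑ k, p k * ‖b k‖ ^ 2 - 2 * (conj α * ∑ k, (p k : ℂ) * a k * b k).re := by
  have re_sum_eq : (conj α * ∑ k, (p k : ℂ) * a k * b k).re
      = ∑ k, p k * (conj α * (a k * b k)).re := by
    rw [mul_sum, re_sum]
    refine sum_congr rfl fun k _ => ?_
    rw [← re_ofReal_mul]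
    ring_nf
  rw [re_sum_eq, mul_sum, mul_sum, ← sum_add_distrib, ← sum_sub_distrib]
  exact sum_congr rfl fun k _ => by rw [norm_sub_mul_conj_sq]; ring

theorem sqrt_mul_sqrt_sub_re_le (hp : ∀ k, 0 ≤ p k) {α : ℂ} (hα : α ≠ 0) {r : ℝ}
    (h : ∀ k, ‖a k - α * conj (b k)‖ ≤ r * ‖b k‖) :
    √(∑ k, p k * ‖a k‖ ^ 2) * √(∑ k, p k * ‖b k‖ ^ 2)
        - (conj α / ‖α‖ * ∑ k, (p k : ℂ) * a k * b k).re
      ≤ 1 / 2 * (r ^ 2 / ‖α‖) * ∑ k, p k * ‖b k‖ ^ 2 := by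
  set A := ∑ k, p k * ‖a k‖ ^ 2
  set B := ∑ k, p k * ‖b k‖ ^ 2
  set S := ∑ k, (p k : ℂ) * a k * b k
  have hm : 0 < ‖α‖ := norm_pos_iff.2 hα
  have hA : 0 ≤ A := sum_nonneg fun k _ => mul_nonneg (hp k) (sq_nonneg _)
  have hB : 0 ≤ B := sum_nonneg fun k _ => mul_nonneg (hp k) (sq_nonneg _)
  have am_gm : 2 * ‖α‖ * (√A * √B) ≤ A + ‖α‖ ^ 2 * B := by
    have := two_mul_le_add_sq √A (‖α‖ * √B)
    rw [mul_pow, Real.sq_sqrt hA, Real.sq_sqrt hB] at this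
    linarith
  have disk : A + ‖α‖ ^ 2 * B - 2 * (conj α * S).re ≤ r ^ 2 * B := by
    rw [← sum_weighted_norm_sub_mul_conj_sq, mul_sum]
    refine sum_le_sum fun k _ => ?_
    rw [mul_left_comm, ← mul_pow]
    exact mul_le_mul_of_nonneg_left (pow_le_pow_left₀ (norm_nonneg _) (h k) 2) (hp k)
  rw [re_div_norm_mul, mul_div_assoc', div_mul_eq_mul_div, le_div_iff₀ hm, sub_mul,
    div_mul_cancel₀ _ hm.ne']
  linarith

end Complex

theorem stmt_5_general (n : ℕ) (a b : Fin n → ℂ) (p : Fin n → ℝ)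
    (hb : ∀ k, b k ≠ 0) (hp : ∀ k, 0 ≤ p k)
    (α : ℂ) (hα : α ≠ 0) (r : ℝ)
    (h : ∀ k, ‖a k / (starRingEnd ℂ) (b k) - α‖ ≤ r) :
    0 ≤ (∑ k, p k * ‖a k‖ ^ 2) ^ ((1 : ℝ) / 2)
        * (∑ k, p k * ‖b k‖ ^ 2) ^ ((1 : ℝ) / 2)
        - ‖∑ k, (p k : ℂ) * a k * b k‖
    ∧ (∑ k, p k * ‖a k‖ ^ 2) ^ ((1 : ℝ) / 2)
        * (∑ k, p k * ‖b k‖ ^ 2) ^ ((1 : ℝ) / 2)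
        - ‖∑ k, (p k : ℂ) * a k * b k‖
      ≤ (∑ k, p k * ‖a k‖ ^ 2) ^ ((1 : ℝ) / 2)
        * (∑ k, p k * ‖b k‖ ^ 2) ^ ((1 : ℝ) / 2)
        - (((starRingEnd ℂ) α / (‖α‖ : ℂ)) * ∑ k, (p k : ℂ) * a k * b k).re
    ∧ (∑ k, p k * ‖a k‖ ^ 2) ^ ((1 : ℝ) / 2)
        * (∑ k, p k * ‖b k‖ ^ 2) ^ ((1 : ℝ) / 2)
        - (((starRingEnd ℂ) α / (‖α‖ : ℂ)) * ∑ k, (p k : ℂ) * a k * b k).re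
      ≤ (1 / 2) * (r ^ 2 / ‖α‖) * ∑ k, p k * ‖b k‖ ^ 2 := by
  have in_disk (k : Fin n) : ‖a k - α * conj (b k)‖ ≤ r * ‖b k‖ := by
    rw [Complex.norm_sub_mul_conj_eq (hb k)]
    exact mul_le_mul_of_nonneg_right (h k) (norm_nonneg (b k))
  simp only [← Real.sqrt_eq_rpow]
  refine ⟨sub_nonneg.2 (Complex.norm_weighted_sum_mul_le_sqrt_mul_sqrt a b hp),
    sub_le_sub_left ?_ _, Complex.sqrt_mul_sqrt_sub_re_le a b hp hα in_disk⟩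
  exact (Complex.re_le_norm _).trans_eq (by rw [norm_mul, Complex.norm_conj_div_norm hα, one_mul])

theorem stmt_5 (n : ℕ) (hn : 0 < n) (a b : Fin n → ℂ) (p : Fin n → ℝ)
    (hb : ∀ k, b k ≠ 0) (hp : ∀ k, 0 ≤ p k) (hp1 : ∑ i, p i = 1)
    (α : ℂ) (hα : α ≠ 0) (r : ℝ) (hr : 0 < r)
    (h : ∀ k, ‖a k / (starRingEnd ℂ) (b k) - α‖ ≤ r) :
    0 ≤ (∑ k, p k * ‖a k‖ ^ 2) ^ ((1 : ℝ) / 2)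
        * (∑ k, p k * ‖b k‖ ^ 2) ^ ((1 : ℝ) / 2)
        - ‖∑ k, (p k : ℂ) * a k * b k‖
    ∧ (∑ k, p k * ‖a k‖ ^ 2) ^ ((1 : ℝ) / 2)
        * (∑ k, p k * ‖b k‖ ^ 2) ^ ((1 : ℝ) / 2)
        - ‖∑ k, (p k : ℂ) * a k * b k‖
      ≤ (∑ k, p k * ‖a k‖ ^ 2) ^ ((1 : ℝ) / 2)
        * (∑ k, p k * ‖b k‖ ^ 2) ^ ((1 : ℝ) / 2)
        - (((starRingEnd ℂ) α / (‖α‖ : ℂ)) * ∑ k, (p k : ℂ) * a k * b k).re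
    ∧ (∑ k, p k * ‖a k‖ ^ 2) ^ ((1 : ℝ) / 2)
        * (∑ k, p k * ‖b k‖ ^ 2) ^ ((1 : ℝ) / 2)
        - (((starRingEnd ℂ) α / (‖α‖ : ℂ)) * ∑ k, (p k : ℂ) * a k * b k).re
      ≤ (1 / 2) * (r ^ 2 / ‖α‖) * ∑ k, p k * ‖b k‖ ^ 2 :=
  stmt_5_general n a b p hb hp α hα r h
end

section
/- Let n be a positive integer, a = (a_1,...,a_n) and b = (b_1,...,b_n) be n-tuples of complex numbers with b_k ≠ 0 for all k, and p = (p_1,...,p_n) nonnegative real weights with ∑_{i=1}^n p_i = 1. Let γ, Γ ∈ ℂ satisfy Re(Γ · conj(γ)) > 0 and Γ ≠ γ, and suppose |a_k/conj(b_k) - (γ + Γ)/2| ≤ (1/2)|Γ - γ| for every k ∈ {1,...,n}. Then (∑_{k=1}^n p_k |a_k|^2)(∑_{k=1}^n p_k |b_k|^2) ≤ (1/(4 Re(Γ conj(γ)))) · ( Re[ (conj(γ) + conj(Γ)) ∑_{k=1}^n p_k a_k b_k ] )^2 ≤ (|Γ + γ|^2/(4 Re(Γ conj(γ)))) · | ∑_{k=1}^n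 p_k a_k b_k |^2. -/
/-!
A point z lies in the closed disk with diameter [γ, Γ] exactly when Re((Γ - z) · conj(z - γ)) ≥ 0
(Thales). For z = a_k / conj(b_k), multiplying by |b_k|² turns this into
|a_k|² + Re(Γ conj γ) |b_k|² ≤ Re((conj γ + conj Γ) a_k b_k). Averaging with the weights p_k gives
A + m B ≤ R, where A, B are the weighted means of |a_k|², |b_k|², m = Re(Γ conj γ) and
R = Re((conj γ + conj Γ) Σ p_k a_k b_k). The first inequality follows from
4 m A B ≤ (A + m B)² ≤ R², the second from Re w ≤ |w|.
-/

open Complex ComplexConjugate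

theorem Complex.re_mul_conj_nonneg_of_norm_sub_midpoint_le {z u v : ℂ}
    (h : ‖z - (u + v) / 2‖ ≤ 1 / 2 * ‖v - u‖) :
    0 ≤ ((v - z) * conj (z - u)).re := by
  have hxy : ‖(v - z) - (z - u)‖ ≤ ‖(v - z) + (z - u)‖ := by
    have : (v - z) - (z - u) = -2 * (z - (u + v) / 2) := by ring
    rw [this, norm_mul, norm_neg, Complex.norm_two]
    calc 2 * ‖z - (u + v) / 2‖ ≤ 2 * (1 / 2 * ‖v - u‖) := by gcongr
      _ = ‖v - z + (z - u)‖ := by ring_nf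
  have hsq := pow_le_pow_left₀ (norm_nonneg _) hxy 2
  rw [Complex.sq_norm, Complex.sq_norm, normSq_sub, normSq_add] at hsq
  linarith

theorem Complex.normSq_add_mul_normSq_le_re {a b γ Γ : ℂ} (hb : b ≠ 0)
    (h : ‖a / conj b - (γ + Γ) / 2‖ ≤ 1 / 2 * ‖Γ - γ‖) :
    normSq a + (Γ * conj γ).re * normSq b ≤ ((conj γ + conj Γ) * a * b).re := by
  have hb' : conj b ≠ 0 := (map_ne_zero _).mpr hb
  have hdisk := re_mul_conj_nonneg_of_norm_sub_midpoint_le h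
  have hscale : (Γ * conj b - a) * (conj a - conj γ * b)
      = (Γ - a / conj b) * conj (a / conj b - γ) * (normSq b : ℂ) := by
    rw [← mul_conj, map_sub, map_div₀, conj_conj]
    field_simp
  have hnonneg : 0 ≤ ((Γ * conj b - a) * (conj a - conj γ * b)).re := by
    rw [hscale, re_mul_ofReal]
    exact mul_nonneg hdisk (normSq_nonneg b)
  simp only [normSq_apply, mul_re, mul_im, sub_re, sub_im, add_re, add_im, conj_re,
    conj_im] at hnonneg ⊢
  linarith

theorem Complex.sum_mul_normSq_add_mul_sum_mul_normSq_le_re {ι : Type*} (s : Finset ι)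
    {a b : ι → ℂ} {p : ι → ℝ} {γ Γ : ℂ} (hb : ∀ k ∈ s, b k ≠ 0) (hp : ∀ k ∈ s, 0 ≤ p k)
    (h : ∀ k ∈ s, ‖a k / conj (b k) - (γ + Γ) / 2‖ ≤ 1 / 2 * ‖Γ - γ‖) :
    ∑ k ∈ s, p k * normSq (a k) + (Γ * conj γ).re * ∑ k ∈ s, p k * normSq (b k)
      ≤ ((conj γ + conj Γ) * ∑ k ∈ s, (p k : ℂ) * a k * b k).re := by
  simp only [Finset.mul_sum, ← Finset.sum_add_distrib, re_sum]
  refine Finset.sum_le_sum fun k hk => ?_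
  calc p k * normSq (a k) + (Γ * conj γ).re * (p k * normSq (b k))
      = p k * (normSq (a k) + (Γ * conj γ).re * normSq (b k)) := by ring
    _ ≤ p k * ((conj γ + conj Γ) * a k * b k).re :=
        mul_le_mul_of_nonneg_left (normSq_add_mul_normSq_le_re (hb k hk) (h k hk)) (hp k hk)
    _ = ((conj γ + conj Γ) * (p k * a k * b k)).re := by
        rw [← re_ofReal_mul]; ring_nf

theorem mul_le_one_div_four_mul_sq_of_add_mul_le {A B m R : ℝ} (hm : 0 < m)
    (h₀ : 0 ≤ A + m * B) (h : A + m * B ≤ R) : A * B ≤ 1 / (4 * m) * R ^ 2 := by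
  rw [one_div_mul_eq_div, le_div_iff₀ (by positivity)]
  calc A * B * (4 * m) = 4 * A * (m * B) := by ring
    _ ≤ (A + m * B) ^ 2 := four_mul_le_sq_add _ _
    _ ≤ R ^ 2 := pow_le_pow_left₀ h₀ h 2

theorem stmt_7_general (n : ℕ) (a b : Fin n → ℂ) (p : Fin n → ℝ)
    (hb : ∀ k, b k ≠ 0) (hp : ∀ k, 0 ≤ p k)
    (γ Γ : ℂ) (hΓγ : 0 < (Γ * (starRingEnd ℂ) γ).re)
    (h : ∀ k, ‖a k / (starRingEnd ℂ) (b k) - (γ + Γ) / 2‖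
        ≤ (1 / 2) * ‖Γ - γ‖) :
    (∑ k, p k * ‖a k‖ ^ 2) * (∑ k, p k * ‖b k‖ ^ 2)
      ≤ (1 / (4 * (Γ * (starRingEnd ℂ) γ).re))
        * ((((starRingEnd ℂ) γ + (starRingEnd ℂ) Γ) * ∑ k, (p k : ℂ) * a k * b k).re) ^ 2
    ∧ (1 / (4 * (Γ * (starRingEnd ℂ) γ).re))
        * ((((starRingEnd ℂ) γ + (starRingEnd ℂ) Γ) * ∑ k, (p k : ℂ) * a k * b k).re) ^ 2
      ≤ (‖Γ + γ‖ ^ 2 / (4 * (Γ * (starRingEnd ℂ) γ).re))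
        * ‖∑ k, (p k : ℂ) * a k * b k‖ ^ 2 := by
  simp only [Complex.sq_norm]
  have hsum := sum_mul_normSq_add_mul_sum_mul_normSq_le_re Finset.univ (fun k _ => hb k)
    (fun k _ => hp k) (fun k _ => h k)
  have hweighted (f : Fin n → ℂ) : 0 ≤ ∑ k, p k * normSq (f k) :=
    Finset.sum_nonneg fun k _ => mul_nonneg (hp k) (normSq_nonneg _)
  refine ⟨mul_le_one_div_four_mul_sq_of_add_mul_le hΓγ ?_ hsum, ?_⟩
  · exact add_nonneg (hweighted a) (mul_nonneg hΓγ.le (hweighted b))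
  · rw [one_div_mul_eq_div, div_mul_eq_mul_div]
    gcongr
    calc _ ≤ normSq _ := by rw [sq]; exact re_sq_le_normSq _
      _ = _ := by rw [normSq_mul, ← map_add, normSq_conj, add_comm]

theorem stmt_7 (n : ℕ) (hn : 0 < n) (a b : Fin n → ℂ) (p : Fin n → ℝ)
    (hb : ∀ k, b k ≠ 0) (hp : ∀ k, 0 ≤ p k) (hp1 : ∑ i, p i = 1)
    (γ Γ : ℂ) (hΓγ : 0 < (Γ * (starRingEnd ℂ) γ).re) (hne : Γ ≠ γ)
    (h : ∀ k, ‖a k / (starRingEnd ℂ) (b k) - (γ + Γ) / 2‖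
        ≤ (1 / 2) * ‖Γ - γ‖) :
    (∑ k, p k * ‖a k‖ ^ 2) * (∑ k, p k * ‖b k‖ ^ 2)
      ≤ (1 / (4 * (Γ * (starRingEnd ℂ) γ).re))
        * ((((starRingEnd ℂ) γ + (starRingEnd ℂ) Γ) * ∑ k, (p k : ℂ) * a k * b k).re) ^ 2
    ∧ (1 / (4 * (Γ * (starRingEnd ℂ) γ).re))
        * ((((starRingEnd ℂ) γ + (starRingEnd ℂ) Γ) * ∑ k, (p k : ℂ) * a k * b k).re) ^ 2
      ≤ (‖Γ + γ‖ ^ 2 / (4 * (Γ * (starRingEnd ℂ) γ).re))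
        * ‖∑ k, (p k : ℂ) * a k * b k‖ ^ 2 :=
  stmt_7_general n a b p hb hp γ Γ hΓγ h
end

section
/- Let n be a positive integer, a = (a_1,...,a_n) and b = (b_1,...,b_n) be n-tuples of complex numbers with b_k ≠ 0 for all k, and p = (p_1,...,p_n) nonnegative real weights with ∑_{i=1}^n p_i = 1. Let γ, Γ ∈ ℂ satisfy Re(Γ · conj(γ)) > 0 and Γ ≠ γ, and suppose |a_k/conj(b_k) - (γ + Γ)/2| ≤ (1/2)|Γ - γ| for every k ∈ {1,...,n}. Then (∑_{k=1}^n p_k |a_k|^2)(∑_{k=1}^n p_k |b_k|^2) - | ∑_{k=1}^n p_k a_k b_k |^2 ≤ (|Γ - γ|^2/(4 Re(Γ conj(γ)))) · | ∑_{k=1}^n p_k a_k b_k |^2. -/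
/-!
Writing `r = Re(Γ γ̄)`, the point `x` lies in the disk with diameter `[γ, Γ]` iff
`|x|² + r ≤ Re(x (γ̄ + Γ̄))`. Applied to `x = a_k / b̄_k` and multiplied by `|b_k|²` this gives
`|a_k|² + r |b_k|² ≤ Re(a_k b_k (γ̄ + Γ̄))`; summing with the weights `p_k` yields
`A + r B ≤ |z| |γ + Γ|` for `A = ∑ p_k |a_k|²`, `B = ∑ p_k |b_k|²`, `z = ∑ p_k a_k b_k`.
By AM-GM, `4 r A B ≤ (A + r B)² ≤ |z|² |γ + Γ|² = |z|² (|Γ - γ|² + 4 r)`, which rearranges to the claim.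
-/

open Complex ComplexConjugate

namespace Complex

theorem sq_norm_add_eq_sq_norm_sub_add_four_mul_re (γ Γ : ℂ) :
    ‖γ + Γ‖ ^ 2 = ‖Γ - γ‖ ^ 2 + 4 * (Γ * conj γ).re := by
  simp only [Complex.sq_norm, normSq_apply, mul_re, add_re, add_im, sub_re, sub_im, conj_re, conj_im]
  ring

theorem sq_norm_add_re_mul_conj_le_of_norm_sub_midpoint_le {x γ Γ : ℂ}
    (h : ‖x - (γ + Γ) / 2‖ ≤ 1 / 2 * ‖Γ - γ‖) :
    ‖x‖ ^ 2 + (Γ * conj γ).re ≤ (x * conj (γ + Γ)).re := by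
  have hsq : ‖x - (γ + Γ) / 2‖ ^ 2 ≤ (1 / 2 * ‖Γ - γ‖) ^ 2 :=
    pow_le_pow_left₀ (norm_nonneg _) h 2
  simp only [Complex.sq_norm, normSq_apply, mul_re, add_re, add_im, sub_re, sub_im, div_re, div_im,
    conj_re, conj_im, mul_pow] at hsq ⊢
  norm_num at hsq
  nlinarith [hsq]

theorem sq_norm_add_re_mul_sq_norm_le_of_norm_div_conj_sub_midpoint_le {a b γ Γ : ℂ}
    (hb : b ≠ 0) (h : ‖a / conj b - (γ + Γ) / 2‖ ≤ 1 / 2 * ‖Γ - γ‖) :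
    ‖a‖ ^ 2 + (Γ * conj γ).re * ‖b‖ ^ 2 ≤ (a * b * conj (γ + Γ)).re := by
  set x := a / conj b
  have ha : a = x * conj b := (div_mul_cancel₀ a ((map_ne_zero conj).2 hb)).symm
  have hx := sq_norm_add_re_mul_conj_le_of_norm_sub_midpoint_le h
  have hre : (a * b * conj (γ + Γ)).re = (x * conj (γ + Γ)).re * ‖b‖ ^ 2 := by
    rw [ha, Complex.sq_norm, ← re_mul_ofReal, normSq_eq_conj_mul_self]
    ring_nf
  rw [hre, ha, norm_mul, norm_conj]
  nlinarith [sq_nonneg ‖b‖]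

end Complex

theorem sum_weighted_sq_norm_add_le_re_sum {ι : Type*} (s : Finset ι) (a b : ι → ℂ)
    (p : ι → ℝ) (hp : ∀ k, 0 ≤ p k) (r : ℝ) (w : ℂ)
    (h : ∀ k, ‖a k‖ ^ 2 + r * ‖b k‖ ^ 2 ≤ (a k * b k * w).re) :
    ∑ k ∈ s, p k * ‖a k‖ ^ 2 + r * ∑ k ∈ s, p k * ‖b k‖ ^ 2
      ≤ ((∑ k ∈ s, (p k : ℂ) * a k * b k) * w).re := by
  rw [Finset.mul_sum, ← Finset.sum_add_distrib, Finset.sum_mul, re_sum]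
  refine Finset.sum_le_sum fun k _ => ?_
  have hk : ((p k : ℂ) * a k * b k * w).re = p k * (a k * b k * w).re := by
    rw [mul_assoc, mul_assoc, re_ofReal_mul, ← mul_assoc]
  rw [hk]
  linarith [mul_le_mul_of_nonneg_left (h k) (hp k)]

theorem four_mul_mul_le_sq_of_add_le {x y M : ℝ} (hx : 0 ≤ x) (hy : 0 ≤ y) (h : x + y ≤ M) :
    4 * x * y ≤ M ^ 2 := by
  nlinarith [sq_nonneg (x - y)]

theorem stmt_8_general (n : ℕ) (a b : Fin n → ℂ) (p : Fin n → ℝ)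
    (hb : ∀ k, b k ≠ 0) (hp : ∀ k, 0 ≤ p k)
    (γ Γ : ℂ) (hΓγ : 0 < (Γ * (starRingEnd ℂ) γ).re)
    (h : ∀ k, ‖a k / (starRingEnd ℂ) (b k) - (γ + Γ) / 2‖
        ≤ (1 / 2) * ‖Γ - γ‖) :
    (∑ k, p k * ‖a k‖ ^ 2) * (∑ k, p k * ‖b k‖ ^ 2)
        - ‖∑ k, (p k : ℂ) * a k * b k‖ ^ 2
      ≤ (‖Γ - γ‖ ^ 2 / (4 * (Γ * (starRingEnd ℂ) γ).re))
        * ‖∑ k, (p k : ℂ) * a k * b k‖ ^ 2 := by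
  set r := (Γ * conj γ).re
  set A := ∑ k, p k * ‖a k‖ ^ 2
  set B := ∑ k, p k * ‖b k‖ ^ 2
  set z := ∑ k, (p k : ℂ) * a k * b k
  have hA : 0 ≤ A := Finset.sum_nonneg fun k _ => mul_nonneg (hp k) (sq_nonneg _)
  have hB : 0 ≤ B := Finset.sum_nonneg fun k _ => mul_nonneg (hp k) (sq_nonneg _)
  have hsum : A + r * B ≤ ‖z‖ * ‖γ + Γ‖ := calc
    A + r * B ≤ (z * conj (γ + Γ)).re := sum_weighted_sq_norm_add_le_re_sum _ a b p hp r _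
        fun k => sq_norm_add_re_mul_sq_norm_le_of_norm_div_conj_sub_midpoint_le (hb k) (h k)
    _ ≤ ‖z * conj (γ + Γ)‖ := re_le_norm _
    _ = ‖z‖ * ‖γ + Γ‖ := by rw [norm_mul, norm_conj]
  have hamgm : 4 * (r * B) * A ≤ ‖z‖ ^ 2 * (‖Γ - γ‖ ^ 2 + 4 * r) := by
    rw [← sq_norm_add_eq_sq_norm_sub_add_four_mul_re, ← mul_pow]
    exact four_mul_mul_le_sq_of_add_le (by positivity) hA (by linarith)
  rw [div_mul_eq_mul_div, le_div_iff₀ (by positivity)]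
  nlinarith

theorem stmt_8 (n : ℕ) (hn : 0 < n) (a b : Fin n → ℂ) (p : Fin n → ℝ)
    (hb : ∀ k, b k ≠ 0) (hp : ∀ k, 0 ≤ p k) (hp1 : ∑ i, p i = 1)
    (γ Γ : ℂ) (hΓγ : 0 < (Γ * (starRingEnd ℂ) γ).re) (hne : Γ ≠ γ)
    (h : ∀ k, ‖a k / (starRingEnd ℂ) (b k) - (γ + Γ) / 2‖
        ≤ (1 / 2) * ‖Γ - γ‖) :
    (∑ k, p k * ‖a k‖ ^ 2) * (∑ k, p k * ‖b k‖ ^ 2)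
        - ‖∑ k, (p k : ℂ) * a k * b k‖ ^ 2
      ≤ (‖Γ - γ‖ ^ 2 / (4 * (Γ * (starRingEnd ℂ) γ).re))
        * ‖∑ k, (p k : ℂ) * a k * b k‖ ^ 2 :=
  stmt_8_general n a b p hb hp γ Γ hΓγ h
end

section
/- Let n be a positive integer, a = (a_1,...,a_n) and b = (b_1,...,b_n) be n-tuples of complex numbers with b_k ≠ 0 for all k, and p = (p_1,...,p_n) nonnegative real weights with ∑_{i=1}^n p_i = 1. Let γ, Γ ∈ ℂ satisfy Re(Γ · conj(γ)) = 0 and Γ ≠ γ, and suppose |a_k/conj(b_k) - (γ + Γ)/2| ≤ (1/2)|Γ - γ| for every k ∈ {1,...,n}. Then ∑_{k=1}^n p_k |a_k|^2 ≤ Re[ (conj(γ) + conj(Γ)) ∑_{k=1}^n p_k a_k b_k ] ≤ |Γ + γ| · | ∑_{k=1}^n p_k a_k b_k |. -/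
/-!
Write `z = a / conj b`. Expanding the square, `‖z - (γ + Γ)/2‖² - (‖Γ - γ‖/2)²` equals
`‖z‖² - Re (z (conj γ + conj Γ)) + Re (Γ conj γ)`, so when `Re (Γ conj γ) = 0` the disk condition
says `‖z‖² ≤ Re (z (conj γ + conj Γ))`. Multiplying by `‖b‖²` (note `z conj b · b = z ‖b‖²`)
gives `‖a‖² ≤ Re ((conj γ + conj Γ) a b)`; averaging with the weights gives the first inequality,
and the second is `Re u ≤ ‖u‖`.
-/
open ComplexConjugate

theorem Complex.sq_norm_sub_midpoint (z γ Γ : ℂ) :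
    ‖z - (γ + Γ) / 2‖ ^ 2
      = (1 / 2 * ‖Γ - γ‖) ^ 2 + ‖z‖ ^ 2 - (z * (conj γ + conj Γ)).re + (Γ * conj γ).re := by
  simp only [mul_pow, Complex.sq_norm, Complex.normSq_apply, Complex.sub_re, Complex.sub_im,
    Complex.add_re, Complex.add_im, Complex.mul_re, Complex.conj_re,
    Complex.conj_im, Complex.div_ofNat_re, Complex.div_ofNat_im]
  ring

theorem Complex.sq_norm_le_re_mul_of_mem_diameter_disk {z γ Γ : ℂ}
    (hΓγ : (Γ * conj γ).re = 0) (hz : ‖z - (γ + Γ) / 2‖ ≤ 1 / 2 * ‖Γ - γ‖) :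
    ‖z‖ ^ 2 ≤ (z * (conj γ + conj Γ)).re := by
  have := pow_le_pow_left₀ (norm_nonneg _) hz 2
  rw [Complex.sq_norm_sub_midpoint, hΓγ] at this
  linarith

theorem Complex.sq_norm_mul_conj_le {z w : ℂ} (hz : ‖z‖ ^ 2 ≤ (z * w).re) (b : ℂ) :
    ‖z * conj b‖ ^ 2 ≤ (w * (z * conj b * b)).re := by
  have hb : z * conj b * b = z * (‖b‖ ^ 2 : ℝ) := by
    rw [mul_assoc, Complex.conj_mul', Complex.ofReal_pow]
  rw [hb, norm_mul, Complex.norm_conj, mul_pow, ← mul_assoc, mul_comm w z,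
    Complex.re_mul_ofReal]
  exact mul_le_mul_of_nonneg_right hz (sq_nonneg _)

theorem Complex.sum_mul_sq_norm_le_re_mul_sum {ι : Type*} (s : Finset ι) {p : ι → ℝ}
    {a b : ι → ℂ} {w : ℂ} (hp : ∀ k ∈ s, 0 ≤ p k) (h : ∀ k ∈ s, ‖a k‖ ^ 2 ≤ (w * (a k * b k)).re) :
    ∑ k ∈ s, p k * ‖a k‖ ^ 2 ≤ (w * ∑ k ∈ s, (p k : ℂ) * a k * b k).re := by
  rw [Finset.mul_sum, Complex.re_sum]
  refine Finset.sum_le_sum fun k hk => ?_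
  rw [show w * ((p k : ℂ) * a k * b k) = p k * (w * (a k * b k)) by ring, Complex.re_ofReal_mul]
  exact mul_le_mul_of_nonneg_left (h k hk) (hp k hk)

theorem stmt_9_general (n : ℕ) (a b : Fin n → ℂ) (p : Fin n → ℝ)
    (hb : ∀ k, b k ≠ 0) (hp : ∀ k, 0 ≤ p k)
    (γ Γ : ℂ) (hΓγ : (Γ * (starRingEnd ℂ) γ).re = 0)
    (h : ∀ k, ‖a k / (starRingEnd ℂ) (b k) - (γ + Γ) / 2‖
        ≤ (1 / 2) * ‖Γ - γ‖) :
    ∑ k, p k * ‖a k‖ ^ 2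
      ≤ (((starRingEnd ℂ) γ + (starRingEnd ℂ) Γ) * ∑ k, (p k : ℂ) * a k * b k).re
    ∧ (((starRingEnd ℂ) γ + (starRingEnd ℂ) Γ) * ∑ k, (p k : ℂ) * a k * b k).re
      ≤ ‖Γ + γ‖ * ‖∑ k, (p k : ℂ) * a k * b k‖ := by
  refine ⟨Complex.sum_mul_sq_norm_le_re_mul_sum _ (fun k _ => hp k) fun k _ => ?_, ?_⟩
  · have hz := Complex.sq_norm_le_re_mul_of_mem_diameter_disk hΓγ (h k)
    have ha : a k / conj (b k) * conj (b k) = a k :=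
      div_mul_cancel₀ _ ((map_ne_zero _).2 (hb k))
    simpa only [ha] using Complex.sq_norm_mul_conj_le hz (b k)
  · calc _ ≤ ‖(conj γ + conj Γ) * ∑ k, (p k : ℂ) * a k * b k‖ := Complex.re_le_norm _
      _ = ‖Γ + γ‖ * ‖∑ k, (p k : ℂ) * a k * b k‖ := by
        rw [norm_mul, ← map_add, Complex.norm_conj, add_comm]

theorem stmt_9 (n : ℕ) (hn : 0 < n) (a b : Fin n → ℂ) (p : Fin n → ℝ)
    (hb : ∀ k, b k ≠ 0) (hp : ∀ k, 0 ≤ p k) (hp1 : ∑ i, p i = 1)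
    (γ Γ : ℂ) (hΓγ : (Γ * (starRingEnd ℂ) γ).re = 0) (hne : Γ ≠ γ)
    (h : ∀ k, ‖a k / (starRingEnd ℂ) (b k) - (γ + Γ) / 2‖
        ≤ (1 / 2) * ‖Γ - γ‖) :
    ∑ k, p k * ‖a k‖ ^ 2
      ≤ (((starRingEnd ℂ) γ + (starRingEnd ℂ) Γ) * ∑ k, (p k : ℂ) * a k * b k).re
    ∧ (((starRingEnd ℂ) γ + (starRingEnd ℂ) Γ) * ∑ k, (p k : ℂ) * a k * b k).re
      ≤ ‖Γ + γ‖ * ‖∑ k, (p k : ℂ) * a k * b k‖ :=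
  stmt_9_general n a b p hb hp γ Γ hΓγ h
end

section
/- Let n be a positive integer, a = (a_1,...,a_n) and b = (b_1,...,b_n) be n-tuples of complex numbers with b_k ≠ 0 for all k, and p = (p_1,...,p_n) nonnegative real weights with ∑_{i=1}^n p_i = 1. Let γ, Γ ∈ ℂ satisfy Re(Γ · conj(γ)) < 0 and Γ ≠ γ, and suppose |a_k/conj(b_k) - (γ + Γ)/2| ≤ (1/2)|Γ - γ| for every k ∈ {1,...,n}. Then ∑_{k=1}^n p_k |a_k|^2 ≤ - Re(Γ conj(γ)) ∑_{k=1}^n p_k |b_k|^2 + Re[ (conj(Γ) + conj(γ)) ∑_{k=1}^n p_k a_k b_k ] ≤ - Re(Γ conj(γ)) ∑_{k=1}^n p_k |b_k|^2 + |Γ + γ| · | ∑_{k=1}^n p_k a_k b_k |. -/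
/-!
A point `z` lies in the closed disk with diameter `[γ, Γ]` iff `Re ((z - γ) * conj (z - Γ)) ≤ 0`,
which expands to `|z|² ≤ -Re (Γ conj γ) + Re ((conj Γ + conj γ) z)`. Taking `z = a_k / conj b_k`,
so that `a_k b_k = |b_k|² z`, multiplying by `p_k |b_k|² ≥ 0` and summing gives the first inequality;
the second is `Re w ≤ |w|`.
-/

open Complex ComplexConjugate

theorem sq_norm_sub_midpoint_sub (z γ Γ : ℂ) :
    ‖z - (γ + Γ) / 2‖ ^ 2 - (‖Γ - γ‖ / 2) ^ 2
      = ‖z‖ ^ 2 + (Γ * conj γ).re - ((conj Γ + conj γ) * z).re := by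
  rw [div_pow, Complex.sq_norm, Complex.sq_norm, Complex.sq_norm]
  simp only [normSq_apply, sub_re, sub_im, add_re, add_im, mul_re,
    div_re, div_im, conj_re, conj_im, re_ofNat, im_ofNat]
  ring

theorem sq_norm_le_of_norm_sub_midpoint_le {z γ Γ : ℂ}
    (hz : ‖z - (γ + Γ) / 2‖ ≤ ‖Γ - γ‖ / 2) :
    ‖z‖ ^ 2 ≤ -(Γ * conj γ).re + ((conj Γ + conj γ) * z).re := by
  have := sq_norm_sub_midpoint_sub z γ Γ
  have := pow_le_pow_left₀ (norm_nonneg _) hz 2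
  linarith

theorem sq_norm_le_of_norm_div_conj_sub_midpoint_le {a b γ Γ : ℂ} (hb : b ≠ 0)
    (h : ‖a / conj b - (γ + Γ) / 2‖ ≤ ‖Γ - γ‖ / 2) :
    ‖a‖ ^ 2 ≤ -(Γ * conj γ).re * ‖b‖ ^ 2 + ((conj Γ + conj γ) * (a * b)).re := by
  set z := a / conj b
  have ha : a = z * conj b := (div_mul_cancel₀ a ((map_ne_zero _).2 hb)).symm
  have hnorm : ‖a‖ ^ 2 = ‖b‖ ^ 2 * ‖z‖ ^ 2 := by
    rw [ha, norm_mul, Complex.norm_conj]; ring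
  have hre : ((conj Γ + conj γ) * (a * b)).re = ‖b‖ ^ 2 * ((conj Γ + conj γ) * z).re := by
    rw [← re_ofReal_mul, ha, mul_assoc z, mul_comm (conj b), Complex.mul_conj']
    push_cast; ring_nf
  rw [hnorm, hre]
  linear_combination ‖b‖ ^ 2 * sq_norm_le_of_norm_sub_midpoint_le h

theorem stmt_10_general (n : ℕ) (a b : Fin n → ℂ) (p : Fin n → ℝ)
    (hb : ∀ k, b k ≠ 0) (hp : ∀ k, 0 ≤ p k)
    (γ Γ : ℂ)
    (h : ∀ k, ‖a k / (starRingEnd ℂ) (b k) - (γ + Γ) / 2‖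
        ≤ (1 / 2) * ‖Γ - γ‖) :
    ∑ k, p k * ‖a k‖ ^ 2
      ≤ -(Γ * (starRingEnd ℂ) γ).re * ∑ k, p k * ‖b k‖ ^ 2
        + (((starRingEnd ℂ) Γ + (starRingEnd ℂ) γ) * ∑ k, (p k : ℂ) * a k * b k).re
    ∧ -(Γ * (starRingEnd ℂ) γ).re * ∑ k, p k * ‖b k‖ ^ 2
        + (((starRingEnd ℂ) Γ + (starRingEnd ℂ) γ) * ∑ k, (p k : ℂ) * a k * b k).re
      ≤ -(Γ * (starRingEnd ℂ) γ).re * ∑ k, p k * ‖b k‖ ^ 2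
        + ‖Γ + γ‖ * ‖∑ k, (p k : ℂ) * a k * b k‖ := by
  refine ⟨?_, add_le_add_right ?_ _⟩
  · have hterm (k : Fin n) : p k * ‖a k‖ ^ 2 ≤ -(Γ * conj γ).re * (p k * ‖b k‖ ^ 2)
        + ((conj Γ + conj γ) * ((p k : ℂ) * a k * b k)).re := by
      have hk := sq_norm_le_of_norm_div_conj_sub_midpoint_le (hb k)
        ((h k).trans_eq (one_div_mul_eq_div _ _))
      rw [mul_assoc (p k : ℂ), mul_left_comm _ (p k : ℂ), re_ofReal_mul]
      linear_combination mul_le_mul_of_nonneg_left hk (hp k)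
    calc ∑ k, p k * ‖a k‖ ^ 2
        ≤ ∑ k, (-(Γ * conj γ).re * (p k * ‖b k‖ ^ 2)
            + ((conj Γ + conj γ) * ((p k : ℂ) * a k * b k)).re) :=
          Finset.sum_le_sum fun k _ => hterm k
      _ = _ := by rw [Finset.sum_add_distrib, ← Finset.mul_sum, ← re_sum, ← Finset.mul_sum]
  · calc _ ≤ ‖(conj Γ + conj γ) * ∑ k, (p k : ℂ) * a k * b k‖ := re_le_norm _
      _ = _ := by rw [norm_mul, ← map_add, norm_conj]

theorem stmt_10 (n : ℕ) (hn : 0 < n) (a b : Fin n → ℂ) (p : Fin n → ℝ)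
    (hb : ∀ k, b k ≠ 0) (hp : ∀ k, 0 ≤ p k) (hp1 : ∑ i, p i = 1)
    (γ Γ : ℂ) (hΓγ : (Γ * (starRingEnd ℂ) γ).re < 0) (hne : Γ ≠ γ)
    (h : ∀ k, ‖a k / (starRingEnd ℂ) (b k) - (γ + Γ) / 2‖
        ≤ (1 / 2) * ‖Γ - γ‖) :
    ∑ k, p k * ‖a k‖ ^ 2
      ≤ -(Γ * (starRingEnd ℂ) γ).re * ∑ k, p k * ‖b k‖ ^ 2
        + (((starRingEnd ℂ) Γ + (starRingEnd ℂ) γ) * ∑ k, (p k : ℂ) * a k * b k).re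
    ∧ -(Γ * (starRingEnd ℂ) γ).re * ∑ k, p k * ‖b k‖ ^ 2
        + (((starRingEnd ℂ) Γ + (starRingEnd ℂ) γ) * ∑ k, (p k : ℂ) * a k * b k).re
      ≤ -(Γ * (starRingEnd ℂ) γ).re * ∑ k, p k * ‖b k‖ ^ 2
        + ‖Γ + γ‖ * ‖∑ k, (p k : ℂ) * a k * b k‖ :=
  stmt_10_general n a b p hb hp γ Γ h
end

section
/- (Cassels' inequality) Let n be a positive integer, a = (a_1,...,a_n) and b = (b_1,...,b_n) be n-tuples of positive real numbers, and p = (p_1,...,p_n) nonnegative real weights with ∑_{i=1}^n p_i = 1. If there exist real constants 0 < m ≤ M such that m ≤ a_k/b_k ≤ M for each k ∈ {1,...,n}, then (∑_{k=1}^n p_k a_k^2)(∑_{k=1}^n p_k b_k^2) ≤ ((M + m)^2/(4 m M)) · (∑_{k=1}^n p_k a_k b_k)^2. -/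
theorem stmt_11 (n : ℕ) (hn : 0 < n) (a b : Fin n → ℝ) (p : Fin n → ℝ)
    (ha : ∀ k, 0 < a k) (hbpos : ∀ k, 0 < b k)
    (hp : ∀ k, 0 ≤ p k) (hp1 : ∑ i, p i = 1)
    (m M : ℝ) (hm : 0 < m) (hmM : m ≤ M)
    (h : ∀ k, m ≤ a k / b k ∧ a k / b k ≤ M) :
    (∑ k, p k * a k ^ 2) * (∑ k, p k * b k ^ 2)
      ≤ ((M + m) ^ 2 / (4 * m * M)) * (∑ k, p k * a k * b k) ^ 2 := by
  have hM : 0 < M := lt_of_lt_of_le hm hmM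
  set Sa := ∑ k, p k * a k ^ 2 with hSa
  set Sb := ∑ k, p k * b k ^ 2 with hSb
  set Sab := ∑ k, p k * a k * b k with hSab
  have hkey : Sa + m * M * Sb ≤ (M + m) * Sab := by
    rw [hSa, hSb, hSab, Finset.mul_sum, Finset.mul_sum, ← Finset.sum_add_distrib]
    apply Finset.sum_le_sum
    intro k _
    have hb := hbpos k
    have h1 : m * b k ≤ a k := by
      have h' := (h k).1
      have : m * b k ≤ (a k / b k) * b k := by nlinarith
      rwa [div_mul_cancel₀ _ (ne_of_gt hb)] at this
    have h2 : a k ≤ M * b k := by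
      have h' := (h k).2
      have : (a k / b k) * b k ≤ M * b k := by nlinarith
      rwa [div_mul_cancel₀ _ (ne_of_gt hb)] at this
    nlinarith [mul_nonneg (hp k) (mul_nonneg (sub_nonneg.2 h1) (sub_nonneg.2 h2))]
  have hSa0 : 0 ≤ Sa := Finset.sum_nonneg fun k _ =>
    mul_nonneg (hp k) (sq_nonneg _)
  have hSb0 : 0 ≤ Sb := Finset.sum_nonneg fun k _ =>
    mul_nonneg (hp k) (sq_nonneg _)
  have hSab0 : 0 ≤ Sab := Finset.sum_nonneg fun k _ =>
    mul_nonneg (mul_nonneg (hp k) (le_of_lt (ha k))) (le_of_lt (hbpos k))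
  rw [div_mul_eq_mul_div, le_div_iff₀ (by positivity)]
  nlinarith [sq_nonneg (Sa - m * M * Sb), sq_nonneg (Sa + m * M * Sb),
    mul_le_mul hkey hkey (by positivity) (by positivity)]
end

section
/- Let n be a positive integer, a = (a_1,...,a_n) and b = (b_1,...,b_n) be n-tuples of complex numbers with b_k ≠ 0 for all k, and p = (p_1,...,p_n) nonnegative real weights with ∑_{i=1}^n p_i = 1. Let γ, Γ ∈ ℂ with Γ ≠ γ and Γ ≠ -γ, and suppose |a_k/conj(b_k) - (γ + Γ)/2| ≤ (1/2)|Γ - γ| for every k ∈ {1,...,n}. Then 0 ≤ (∑_{k=1}^n p_k |a_k|^2)^{1/2}(∑_{k=1}^n p_k |b_k|^2)^{1/2} - | ∑_{k=1}^n p_k a_k b_k | ≤ (∑_{k=1}^n p_k |a_k|^2)^{1/2}(∑_{k=1}^n p_k |b_k|^2)^{1/2} - Re[ ((conj(Γ) + conj(γ))/|Γ + γ|) ∑_{k=1}^n p_k a_k b_k ] ≤ (1/4) · (|Γ - γ|^2/|Γ + γ|) · ∑_{k=1}^n p_k |b_k|^2. -/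
/-!
Write `c = (γ + Γ)/2` and `e = |Γ - γ|/2`. The disk condition says `|a_k - c conj(b_k)| ≤ e |b_k|`;
squaring, weighting and summing gives
`A + |c|² B - 2 Re(conj c · S) ≤ e² B`, where `A = ∑ p_k |a_k|²`, `B = ∑ p_k |b_k|²` and
`S = ∑ p_k a_k b_k`. Combined with the AM-GM bound `2 |c| √A √B ≤ A + |c|² B`, this yields the
reverse Cauchy–Schwarz inequality `√A √B - Re(conj c / |c| · S) ≤ e² B / (2 |c|)`. The two other
inequalities are the weighted Cauchy–Schwarz inequality and `Re(u S) ≤ |S|` for `|u| = 1`.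
-/

open Finset ComplexConjugate

lemma Complex.sq_norm_sub_mul_conj_s12 (x y c : ℂ) :
    ‖x - c * conj y‖ ^ 2 = ‖x‖ ^ 2 + ‖c‖ ^ 2 * ‖y‖ ^ 2 - 2 * (conj c * x * y).re := by
  rw [Complex.sq_norm, Complex.normSq_sub, Complex.normSq_mul, Complex.normSq_conj,
    ← Complex.sq_norm, ← Complex.sq_norm, ← Complex.sq_norm, map_mul, Complex.conj_conj]
  ring_nf

lemma Complex.norm_sub_mul_conj_le {x y c : ℂ} {e : ℝ} (hy : y ≠ 0)
    (h : ‖x / conj y - c‖ ≤ e) : ‖x - c * conj y‖ ≤ e * ‖y‖ := by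
  have hy' : conj y ≠ 0 := (map_ne_zero _).2 hy
  calc ‖x - c * conj y‖ = ‖x / conj y - c‖ * ‖y‖ := by
        rw [← Complex.norm_conj y, ← norm_mul, sub_mul, div_mul_cancel₀ _ hy']
    _ ≤ e * ‖y‖ := by gcongr

section WeightedSums

variable {ι : Type*} (s : Finset ι) (p : ι → ℝ) (a b : ι → ℂ)

lemma Complex.norm_sum_weighted_mul_le_sqrt_mul_sqrt (hp : ∀ k, 0 ≤ p k) :
    ‖∑ k ∈ s, (p k : ℂ) * a k * b k‖
      ≤ √(∑ k ∈ s, p k * ‖a k‖ ^ 2) * √(∑ k ∈ s, p k * ‖b k‖ ^ 2) := by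
  have hterm : ∀ k, ‖(p k : ℂ) * a k * b k‖ = √(p k * ‖a k‖ ^ 2) * √(p k * ‖b k‖ ^ 2) := by
    intro k
    rw [← Real.sqrt_mul (mul_nonneg (hp k) (sq_nonneg _)),
      show p k * ‖a k‖ ^ 2 * (p k * ‖b k‖ ^ 2) = (p k * ‖a k‖ * ‖b k‖) ^ 2 by ring,
      Real.sqrt_sq (by have := hp k; positivity), norm_mul, norm_mul, Complex.norm_real,
      Real.norm_of_nonneg (hp k)]
  calc ‖∑ k ∈ s, (p k : ℂ) * a k * b k‖ ≤ ∑ k ∈ s, ‖(p k : ℂ) * a k * b k‖ := norm_sum_le _ _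
    _ = ∑ k ∈ s, √(p k * ‖a k‖ ^ 2) * √(p k * ‖b k‖ ^ 2) := sum_congr rfl fun k _ => hterm k
    _ ≤ _ := Real.sum_sqrt_mul_sqrt_le s (fun k => mul_nonneg (hp k) (sq_nonneg _))
        (fun k => mul_nonneg (hp k) (sq_nonneg _))

lemma Complex.weighted_sum_sq_norm_sub_mul_conj (c : ℂ) :
    ∑ k ∈ s, p k * ‖a k - c * conj (b k)‖ ^ 2
      = ∑ k ∈ s, p k * ‖a k‖ ^ 2 + ‖c‖ ^ 2 * ∑ k ∈ s, p k * ‖b k‖ ^ 2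
        - 2 * (conj c * ∑ k ∈ s, (p k : ℂ) * a k * b k).re := by
  simp only [Complex.sq_norm_sub_mul_conj_s12, mul_sum, Complex.re_sum, mul_sub, mul_add,
    sum_sub_distrib, sum_add_distrib]
  congr 1
  · congr 1
    exact sum_congr rfl fun k _ => by ring
  · exact sum_congr rfl fun k _ => by
      rw [show conj c * ((p k : ℂ) * a k * b k) = (p k : ℂ) * (conj c * a k * b k) by ring,
        Complex.re_ofReal_mul]
      ring

lemma Complex.weighted_sum_sq_norm_sub_mul_conj_le (hp : ∀ k, 0 ≤ p k) (hb : ∀ k, b k ≠ 0)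
    {c : ℂ} {e : ℝ} (h : ∀ k, ‖a k / conj (b k) - c‖ ≤ e) :
    ∑ k ∈ s, p k * ‖a k - c * conj (b k)‖ ^ 2 ≤ e ^ 2 * ∑ k ∈ s, p k * ‖b k‖ ^ 2 := by
  rw [mul_sum]
  refine sum_le_sum fun k _ => ?_
  rw [mul_left_comm, ← mul_pow]
  gcongr
  · exact hp k
  · exact Complex.norm_sub_mul_conj_le (hb k) (h k)

end WeightedSums

lemma Real.sqrt_mul_sqrt_sub_le_of_sub_two_mul_le {A B m ρ e : ℝ} (hA : 0 ≤ A) (hB : 0 ≤ B)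
    (hm : 0 < m) (h : A + m ^ 2 * B - 2 * m * ρ ≤ e ^ 2 * B) :
    √A * √B - ρ ≤ e ^ 2 / (2 * m) * B := by
  have amgm : 2 * m * (√A * √B) ≤ A + m ^ 2 * B := by
    nlinarith [sq_nonneg (√A - m * √B), Real.sq_sqrt hA, Real.sq_sqrt hB]
  rw [div_mul_eq_mul_div, le_div_iff₀ (by positivity)]
  linarith

theorem Complex.sqrt_mul_sqrt_sub_re_le_s12 {ι : Type*} (s : Finset ι) (p : ι → ℝ) (a b : ι → ℂ)
    (hp : ∀ k, 0 ≤ p k) (hb : ∀ k, b k ≠ 0) {c : ℂ} (hc : c ≠ 0) {e : ℝ}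
    (h : ∀ k, ‖a k / conj (b k) - c‖ ≤ e) :
    √(∑ k ∈ s, p k * ‖a k‖ ^ 2) * √(∑ k ∈ s, p k * ‖b k‖ ^ 2)
        - (conj c / (‖c‖ : ℂ) * ∑ k ∈ s, (p k : ℂ) * a k * b k).re
      ≤ e ^ 2 / (2 * ‖c‖) * ∑ k ∈ s, p k * ‖b k‖ ^ 2 := by
  refine Real.sqrt_mul_sqrt_sub_le_of_sub_two_mul_le
    (sum_nonneg fun k _ => mul_nonneg (hp k) (sq_nonneg _))
    (sum_nonneg fun k _ => mul_nonneg (hp k) (sq_nonneg _)) (norm_pos_iff.2 hc) ?_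
  have hc' : (‖c‖ : ℂ) ≠ 0 := Complex.ofReal_ne_zero.2 (norm_ne_zero_iff.2 hc)
  rw [mul_assoc 2, ← Complex.re_ofReal_mul, ← mul_assoc, mul_div_cancel₀ _ hc',
    ← Complex.weighted_sum_sq_norm_sub_mul_conj]
  exact Complex.weighted_sum_sq_norm_sub_mul_conj_le s p a b hp hb h

lemma Complex.re_mul_le_norm_of_norm_eq_one {u : ℂ} (hu : ‖u‖ = 1) (z : ℂ) :
    (u * z).re ≤ ‖z‖ :=
  (Complex.re_le_norm _).trans_eq (by rw [norm_mul, hu, one_mul])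

theorem stmt_12_general (n : ℕ) (a b : Fin n → ℂ) (p : Fin n → ℝ)
    (hb : ∀ k, b k ≠ 0) (hp : ∀ k, 0 ≤ p k)
    (γ Γ : ℂ) (hne' : Γ ≠ -γ)
    (h : ∀ k, ‖a k / (starRingEnd ℂ) (b k) - (γ + Γ) / 2‖
        ≤ (1 / 2) * ‖Γ - γ‖) :
    0 ≤ (∑ k, p k * ‖a k‖ ^ 2) ^ ((1 : ℝ) / 2)
        * (∑ k, p k * ‖b k‖ ^ 2) ^ ((1 : ℝ) / 2)
        - ‖∑ k, (p k : ℂ) * a k * b k‖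
    ∧ (∑ k, p k * ‖a k‖ ^ 2) ^ ((1 : ℝ) / 2)
        * (∑ k, p k * ‖b k‖ ^ 2) ^ ((1 : ℝ) / 2)
        - ‖∑ k, (p k : ℂ) * a k * b k‖
      ≤ (∑ k, p k * ‖a k‖ ^ 2) ^ ((1 : ℝ) / 2)
        * (∑ k, p k * ‖b k‖ ^ 2) ^ ((1 : ℝ) / 2)
        - ((((starRingEnd ℂ) Γ + (starRingEnd ℂ) γ) / (‖Γ + γ‖ : ℂ))
            * ∑ k, (p k : ℂ) * a k * b k).re
    ∧ (∑ k, p k * ‖a k‖ ^ 2) ^ ((1 : ℝ) / 2)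
        * (∑ k, p k * ‖b k‖ ^ 2) ^ ((1 : ℝ) / 2)
        - ((((starRingEnd ℂ) Γ + (starRingEnd ℂ) γ) / (‖Γ + γ‖ : ℂ))
            * ∑ k, (p k : ℂ) * a k * b k).re
      ≤ (1 / 4) * (‖Γ - γ‖ ^ 2 / ‖Γ + γ‖)
        * ∑ k, p k * ‖b k‖ ^ 2 := by
  have hsum : Γ + γ ≠ 0 := fun h0 => hne' (eq_neg_of_add_eq_zero_left h0)
  have hc : (γ + Γ) / 2 ≠ 0 := div_ne_zero (by rwa [add_comm]) two_ne_zero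
  have hnorm_c : ‖(γ + Γ) / 2‖ = ‖Γ + γ‖ / 2 := by rw [norm_div, Complex.norm_two, add_comm]
  have hu : ((starRingEnd ℂ) Γ + (starRingEnd ℂ) γ) / (‖Γ + γ‖ : ℂ)
      = conj ((γ + Γ) / 2) / (‖(γ + Γ) / 2‖ : ℂ) := by
    rw [hnorm_c, map_div₀, map_add, map_ofNat, Complex.ofReal_div, Complex.ofReal_ofNat,
      div_div_div_cancel_right₀ two_ne_zero, add_comm]
  have hu_norm : ‖((starRingEnd ℂ) Γ + (starRingEnd ℂ) γ) / (‖Γ + γ‖ : ℂ)‖ = 1 := by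
    rw [← map_add, norm_div, Complex.norm_conj, Complex.norm_real, norm_norm,
      div_self (norm_ne_zero_iff.2 hsum)]
  have hconst : (1 / 4) * (‖Γ - γ‖ ^ 2 / ‖Γ + γ‖)
      = ((1 / 2) * ‖Γ - γ‖) ^ 2 / (2 * ‖(γ + Γ) / 2‖) := by
    rw [hnorm_c]; ring
  simp only [← Real.sqrt_eq_rpow]
  refine ⟨sub_nonneg.2 (Complex.norm_sum_weighted_mul_le_sqrt_mul_sqrt _ p a b hp),
    sub_le_sub_left (Complex.re_mul_le_norm_of_norm_eq_one hu_norm _) _, ?_⟩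
  rw [hu, hconst]
  exact Complex.sqrt_mul_sqrt_sub_re_le_s12 _ p a b hp hb hc h

theorem stmt_12 (n : ℕ) (hn : 0 < n) (a b : Fin n → ℂ) (p : Fin n → ℝ)
    (hb : ∀ k, b k ≠ 0) (hp : ∀ k, 0 ≤ p k) (hp1 : ∑ i, p i = 1)
    (γ Γ : ℂ) (hne : Γ ≠ γ) (hne' : Γ ≠ -γ)
    (h : ∀ k, ‖a k / (starRingEnd ℂ) (b k) - (γ + Γ) / 2‖
        ≤ (1 / 2) * ‖Γ - γ‖) :
    0 ≤ (∑ k, p k * ‖a k‖ ^ 2) ^ ((1 : ℝ) / 2)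
        * (∑ k, p k * ‖b k‖ ^ 2) ^ ((1 : ℝ) / 2)
        - ‖∑ k, (p k : ℂ) * a k * b k‖
    ∧ (∑ k, p k * ‖a k‖ ^ 2) ^ ((1 : ℝ) / 2)
        * (∑ k, p k * ‖b k‖ ^ 2) ^ ((1 : ℝ) / 2)
        - ‖∑ k, (p k : ℂ) * a k * b k‖
      ≤ (∑ k, p k * ‖a k‖ ^ 2) ^ ((1 : ℝ) / 2)
        * (∑ k, p k * ‖b k‖ ^ 2) ^ ((1 : ℝ) / 2)
        - ((((starRingEnd ℂ) Γ + (starRingEnd ℂ) γ) / (‖Γ + γ‖ : ℂ))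
            * ∑ k, (p k : ℂ) * a k * b k).re
    ∧ (∑ k, p k * ‖a k‖ ^ 2) ^ ((1 : ℝ) / 2)
        * (∑ k, p k * ‖b k‖ ^ 2) ^ ((1 : ℝ) / 2)
        - ((((starRingEnd ℂ) Γ + (starRingEnd ℂ) γ) / (‖Γ + γ‖ : ℂ))
            * ∑ k, (p k : ℂ) * a k * b k).re
      ≤ (1 / 4) * (‖Γ - γ‖ ^ 2 / ‖Γ + γ‖)
        * ∑ k, p k * ‖b k‖ ^ 2 :=
  stmt_12_general n a b p hb hp γ Γ hne' h
end

section
/- Let n be a positive integer, a = (a_1,...,a_n) and b = (b_1,...,b_n) be n-tuples of positive real numbers, and p = (p_1,...,p_n) nonnegative real weights with ∑_{i=1}^n p_i = 1. If there exist real constants 0 < m < M such that m ≤ a_k/b_k ≤ M for each k ∈ {1,...,n}, then 0 ≤ (∑_{k=1}^n p_k a_k^2)^{1/2}(∑_{k=1}^n p_k b_k^2)^{1/2} - ∑_{k=1}^n p_k a_k b_k ≤ (1/4) · ((M - m)^2/(M + m)) · ∑_{k=1}^n p_k b_k^2. -/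
theorem stmt_13 (n : ℕ) (hn : 0 < n) (a b : Fin n → ℝ) (p : Fin n → ℝ)
    (ha : ∀ k, 0 < a k) (hbpos : ∀ k, 0 < b k)
    (hp : ∀ k, 0 ≤ p k) (hp1 : ∑ i, p i = 1)
    (m M : ℝ) (hm : 0 < m) (hmM : m < M)
    (h : ∀ k, m ≤ a k / b k ∧ a k / b k ≤ M) :
    0 ≤ (∑ k, p k * a k ^ 2) ^ ((1 : ℝ) / 2) * (∑ k, p k * b k ^ 2) ^ ((1 : ℝ) / 2)
        - ∑ k, p k * a k * b k
    ∧ (∑ k, p k * a k ^ 2) ^ ((1 : ℝ) / 2) * (∑ k, p k * b k ^ 2) ^ ((1 : ℝ) / 2)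
        - ∑ k, p k * a k * b k
      ≤ (1 / 4) * ((M - m) ^ 2 / (M + m)) * ∑ k, p k * b k ^ 2 := by
  set A := ∑ k, p k * a k ^ 2 with hAdef
  set B := ∑ k, p k * b k ^ 2 with hBdef
  set C := ∑ k, p k * a k * b k with hCdef
  have hA : 0 ≤ A := Finset.sum_nonneg fun k _ =>
    mul_nonneg (hp k) (sq_nonneg _)
  have hB : 0 ≤ B := Finset.sum_nonneg fun k _ =>
    mul_nonneg (hp k) (sq_nonneg _)
  have hC : 0 ≤ C := Finset.sum_nonneg fun k _ =>
    mul_nonneg (mul_nonneg (hp k) (ha k).le) (hbpos k).le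
  -- key inequality: A + m*M*B ≤ (m+M)*C
  have hkey : A + m * M * B ≤ (m + M) * C := by
    have : ∀ k ∈ Finset.univ, p k * a k ^ 2 + m * M * (p k * b k ^ 2)
        ≤ (m + M) * (p k * a k * b k) := by
      intro k _
      have hb := hbpos k
      have h1 : m * b k ≤ a k := by
        have := (h k).1
        rw [le_div_iff₀ hb] at this; linarith
      have h2 : a k ≤ M * b k := by
        have := (h k).2
        rw [div_le_iff₀ hb] at this; linarith
      have hprod : 0 ≤ (a k - m * b k) * (M * b k - a k) :=
        mul_nonneg (by linarith) (by linarith)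
      nlinarith [hp k, mul_nonneg (hp k) hprod]
    calc A + m * M * B = ∑ k, (p k * a k ^ 2 + m * M * (p k * b k ^ 2)) := by
          rw [hAdef, hBdef, Finset.sum_add_distrib, Finset.mul_sum]
      _ ≤ ∑ k, (m + M) * (p k * a k * b k) := Finset.sum_le_sum this
      _ = (m + M) * C := by rw [hCdef, Finset.mul_sum]
  -- Cauchy-Schwarz: C^2 ≤ A * B
  have hCS : C ^ 2 ≤ A * B := by
    have key := Finset.sum_mul_sq_le_sq_mul_sq Finset.univ
      (fun k => Real.sqrt (p k) * a k) (fun k => Real.sqrt (p k) * b k)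
    have e1 : ∑ k, (Real.sqrt (p k) * a k) * (Real.sqrt (p k) * b k) = C := by
      apply Finset.sum_congr rfl
      intro k _
      have e : Real.sqrt (p k) * a k * (Real.sqrt (p k) * b k)
          = Real.sqrt (p k) ^ 2 * (a k * b k) := by ring
      rw [e, Real.sq_sqrt (hp k)]; ring
    have e2 : ∑ k, (Real.sqrt (p k) * a k) ^ 2 = A := by
      apply Finset.sum_congr rfl
      intro k _
      rw [mul_pow, Real.sq_sqrt (hp k)]
    have e3 : ∑ k, (Real.sqrt (p k) * b k) ^ 2 = B := by
      apply Finset.sum_congr rfl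
      intro k _
      rw [mul_pow, Real.sq_sqrt (hp k)]
    rw [e1, e2, e3] at key
    exact key
  have hsA : Real.sqrt A ^ 2 = A := Real.sq_sqrt hA
  have hsB : Real.sqrt B ^ 2 = B := Real.sq_sqrt hB
  have hCle : C ≤ Real.sqrt A * Real.sqrt B := by
    have h1 : Real.sqrt (C ^ 2) ≤ Real.sqrt (A * B) := Real.sqrt_le_sqrt hCS
    rwa [Real.sqrt_sq hC, Real.sqrt_mul hA] at h1
  rw [← Real.sqrt_eq_rpow, ← Real.sqrt_eq_rpow]
  constructor
  · linarith
  · have hsAnn := Real.sqrt_nonneg A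
    have hsBnn := Real.sqrt_nonneg B
    have hMm : 0 < M + m := by linarith
    have hsq := sq_nonneg (2 * Real.sqrt A - (m + M) * Real.sqrt B)
    have hX : 4 * ((m + M) * (Real.sqrt A * Real.sqrt B)) ≤ 4 * A + (m + M) ^ 2 * B := by
      nlinarith [hsq, hsA, hsB]
    have hfin : (M + m) * (Real.sqrt A * Real.sqrt B - C) ≤ (M - m) ^ 2 / 4 * B := by
      nlinarith [hkey, hX]
    calc Real.sqrt A * Real.sqrt B - C ≤ ((M - m) ^ 2 / 4 * B) / (M + m) := by
          rw [le_div_iff₀ hMm]; linarith [hfin]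
      _ = 1 / 4 * ((M - m) ^ 2 / (M + m)) * B := by ring
end

section
/- Let n be a positive integer, a = (a_1,...,a_n) and b = (b_1,...,b_n) be n-tuples of complex numbers, p = (p_1,...,p_n) nonnegative real weights with ∑_{i=1}^n p_i = 1, and r > 0 such that ∑_{i=1}^n p_i |b_i - conj(a_i)|^2 ≤ r^2 < ∑_{i=1}^n p_i |a_i|^2. Then 0 ≤ (∑_{i=1}^n p_i |a_i|^2)(∑_{i=1}^n p_i |b_i|^2) - | ∑_{i=1}^n p_i a_i b_i |^2 ≤ (∑_{i=1}^n p_i |a_i|^2)(∑_{i=1}^n p_i |b_i|^2) - ( Re[ ∑_{i=1}^n p_i a_i b_i ] )^2 ≤ r^2 · ∑_{i=1}^n p_i |b_i|^2. -/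
/-!
Expanding `‖b - conj a‖²` turns the hypothesis into `A + B - 2 Re S ≤ r²`, where `A`, `B` are the
weighted second moments of `a`, `b` and `S = ∑ pᵢ aᵢ bᵢ`. Since `r² < A`, this lower bound on
`Re S` is positive, so it may be squared, and `A B - (Re S)² ≤ r² B` reduces to
`(A - B - r²)² ≥ 0`. The first two inequalities are Cauchy–Schwarz and `(Re S)² ≤ ‖S‖²`.
-/

open Finset ComplexConjugate

section WeightedSums

variable {ι : Type*} (s : Finset ι) (p : ι → ℝ) (a b : ι → ℂ)

theorem norm_sum_weighted_mul_sq_le (hp : ∀ i ∈ s, 0 ≤ p i) :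
    ‖∑ i ∈ s, (p i : ℂ) * a i * b i‖ ^ 2
      ≤ (∑ i ∈ s, p i * ‖a i‖ ^ 2) * ∑ i ∈ s, p i * ‖b i‖ ^ 2 := by
  have hnorm : ‖∑ i ∈ s, (p i : ℂ) * a i * b i‖ ≤ ∑ i ∈ s, p i * ‖a i‖ * ‖b i‖ :=
    (norm_sum_le _ _).trans_eq <| sum_congr rfl fun i hi => by
      simp [abs_of_nonneg (hp i hi)]
  calc ‖∑ i ∈ s, (p i : ℂ) * a i * b i‖ ^ 2 ≤ (∑ i ∈ s, p i * ‖a i‖ * ‖b i‖) ^ 2 := by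
        gcongr
    _ ≤ _ := sum_sq_le_sum_mul_sum_of_sq_le_mul s
        (fun i hi => mul_nonneg (hp i hi) (sq_nonneg _))
        (fun i hi => mul_nonneg (hp i hi) (sq_nonneg _)) fun i _ => le_of_eq (by ring)

theorem sum_weighted_norm_sub_conj_sq :
    ∑ i ∈ s, p i * ‖b i - conj (a i)‖ ^ 2
      = ∑ i ∈ s, p i * ‖a i‖ ^ 2 + ∑ i ∈ s, p i * ‖b i‖ ^ 2
        - 2 * (∑ i ∈ s, (p i : ℂ) * a i * b i).re := by
  simp only [Complex.re_sum, mul_assoc, Complex.re_ofReal_mul, mul_sum, ← sum_add_distrib,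
    ← sum_sub_distrib]
  refine sum_congr rfl fun i _ => ?_
  rw [Complex.sq_norm, Complex.sq_norm, Complex.sq_norm, Complex.normSq_sub, Complex.normSq_conj,
    Complex.conj_conj, mul_comm (b i)]
  ring

end WeightedSums

theorem mul_sub_sq_le_of_add_sub_two_mul_le {A B x c : ℝ} (hx : A + B - 2 * x ≤ c)
    (hc : c ≤ A + B) : A * B - x ^ 2 ≤ c * B := by
  nlinarith [sq_nonneg (A - B - c), mul_nonneg (by linarith : 0 ≤ 2 * x - (A + B - c))
    (by linarith : 0 ≤ 2 * x + (A + B - c))]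

theorem stmt_14_general (n : ℕ) (a b : Fin n → ℂ) (p : Fin n → ℝ)
    (hp : ∀ k, 0 ≤ p k) (r : ℝ)
    (h1 : ∑ i, p i * ‖b i - (starRingEnd ℂ) (a i)‖ ^ 2 ≤ r ^ 2)
    (h2 : r ^ 2 < ∑ i, p i * ‖a i‖ ^ 2) :
    0 ≤ (∑ i, p i * ‖a i‖ ^ 2) * (∑ i, p i * ‖b i‖ ^ 2)
        - ‖∑ i, (p i : ℂ) * a i * b i‖ ^ 2
    ∧ (∑ i, p i * ‖a i‖ ^ 2) * (∑ i, p i * ‖b i‖ ^ 2)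
        - ‖∑ i, (p i : ℂ) * a i * b i‖ ^ 2
      ≤ (∑ i, p i * ‖a i‖ ^ 2) * (∑ i, p i * ‖b i‖ ^ 2)
        - (∑ i, (p i : ℂ) * a i * b i).re ^ 2
    ∧ (∑ i, p i * ‖a i‖ ^ 2) * (∑ i, p i * ‖b i‖ ^ 2)
        - (∑ i, (p i : ℂ) * a i * b i).re ^ 2
      ≤ r ^ 2 * ∑ i, p i * ‖b i‖ ^ 2 := by
  have hB : 0 ≤ ∑ i, p i * ‖b i‖ ^ 2 := sum_nonneg fun i _ => mul_nonneg (hp i) (sq_nonneg _)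
  rw [sum_weighted_norm_sub_conj_sq] at h1
  refine ⟨sub_nonneg.2 (norm_sum_weighted_mul_sq_le univ p a b fun i _ => hp i),
    sub_le_sub_left (sq_le_sq.2 ((Complex.abs_re_le_norm _).trans (le_abs_self _))) _,
    mul_sub_sq_le_of_add_sub_two_mul_le h1 (by linarith)⟩

theorem stmt_14 (n : ℕ) (hn : 0 < n) (a b : Fin n → ℂ) (p : Fin n → ℝ)
    (hp : ∀ k, 0 ≤ p k) (hp1 : ∑ i, p i = 1) (r : ℝ) (hr : 0 < r)
    (h1 : ∑ i, p i * ‖b i - (starRingEnd ℂ) (a i)‖ ^ 2 ≤ r ^ 2)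
    (h2 : r ^ 2 < ∑ i, p i * ‖a i‖ ^ 2) :
    0 ≤ (∑ i, p i * ‖a i‖ ^ 2) * (∑ i, p i * ‖b i‖ ^ 2)
        - ‖∑ i, (p i : ℂ) * a i * b i‖ ^ 2
    ∧ (∑ i, p i * ‖a i‖ ^ 2) * (∑ i, p i * ‖b i‖ ^ 2)
        - ‖∑ i, (p i : ℂ) * a i * b i‖ ^ 2
      ≤ (∑ i, p i * ‖a i‖ ^ 2) * (∑ i, p i * ‖b i‖ ^ 2)
        - (∑ i, (p i : ℂ) * a i * b i).re ^ 2
    ∧ (∑ i, p i * ‖a i‖ ^ 2) * (∑ i, p i * ‖b i‖ ^ 2)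
        - (∑ i, (p i : ℂ) * a i * b i).re ^ 2
      ≤ r ^ 2 * ∑ i, p i * ‖b i‖ ^ 2 :=
  stmt_14_general n a b p hp r h1 h2
end

section
/- Let n be a positive integer, a = (a_1,...,a_n) and b = (b_1,...,b_n) be n-tuples of complex numbers, p = (p_1,...,p_n) nonnegative real weights with ∑_{i=1}^n p_i = 1, and r > 0 such that ∑_{i=1}^n p_i |b_i - conj(a_i)|^2 ≤ r^2. Then 0 ≤ ( (∑_{i=1}^n p_i |b_i|^2)(∑_{i=1}^n p_i |a_i|^2) )^{1/2} - | ∑_{i=1}^n p_i a_i b_i | ≤ ( (∑_{i=1}^n p_i |b_i|^2)(∑_{i=1}^n p_i |a_i|^2) )^{1/2} - | ∑_{i=1}^n p_i Re(a_i b_i) | ≤ ( (∑_{i=1}^n p_i |b_i|^2)(∑_{i=1}^n p_i |a_i|^2) )^{1/2} - ∑_{i=1}^n p_i Re(a_i b_i) ≤ (1/2) r^2. -/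
/-! With `A = ∑ pᵢ‖bᵢ‖²` and `B = ∑ pᵢ‖aᵢ‖²`, expanding the hypothesis gives
`A + B - 2 ∑ pᵢ Re(aᵢbᵢ) ≤ r²`, so the last inequality is AM–GM `√(AB) ≤ (A + B) / 2`.
The first one is the weighted Cauchy–Schwarz inequality, and the middle ones are
`|Re z| ≤ ‖z‖` and `x ≤ |x|`. -/

open Finset ComplexConjugate

namespace Complex

theorem norm_sub_conj_sq (a b : ℂ) : ‖b - conj a‖ ^ 2 = ‖b‖ ^ 2 + ‖a‖ ^ 2 - 2 * (a * b).re := by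
  simp only [Complex.sq_norm, normSq_sub, normSq_conj, conj_conj, mul_comm b a]

end Complex

section Weighted

variable {ι : Type*} (s : Finset ι) {p : ι → ℝ} (a b : ι → ℂ)

theorem sum_mul_norm_sub_conj_sq :
    ∑ i ∈ s, p i * ‖b i - conj (a i)‖ ^ 2 =
      ∑ i ∈ s, p i * ‖b i‖ ^ 2 + ∑ i ∈ s, p i * ‖a i‖ ^ 2 - 2 * ∑ i ∈ s, p i * (a i * b i).re := by
  simp only [Complex.norm_sub_conj_sq, mul_sub, mul_add, sum_sub_distrib, sum_add_distrib, mul_sum]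
  congr 1
  exact sum_congr rfl fun i _ => by ring

theorem re_sum_ofReal_mul_mul :
    (∑ i ∈ s, (p i : ℂ) * a i * b i).re = ∑ i ∈ s, p i * (a i * b i).re := by
  simp only [Complex.re_sum, mul_assoc, Complex.re_ofReal_mul]

theorem norm_sum_ofReal_mul_mul_le_sqrt (hp : ∀ i ∈ s, 0 ≤ p i) :
    ‖∑ i ∈ s, (p i : ℂ) * a i * b i‖ ≤
      √((∑ i ∈ s, p i * ‖b i‖ ^ 2) * ∑ i ∈ s, p i * ‖a i‖ ^ 2) := by
  have hsq (c : ι → ℂ) : ∀ i ∈ s, (√(p i) * ‖c i‖) ^ 2 = p i * ‖c i‖ ^ 2 := fun i hi => by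
    rw [mul_pow, Real.sq_sqrt (hp i hi)]
  calc ‖∑ i ∈ s, (p i : ℂ) * a i * b i‖
      ≤ ∑ i ∈ s, (√(p i) * ‖b i‖) * (√(p i) * ‖a i‖) := by
        refine (norm_sum_le _ _).trans_eq (sum_congr rfl fun i hi => ?_)
        rw [norm_mul, norm_mul, Complex.norm_of_nonneg (hp i hi)]
        linear_combination -(‖a i‖ * ‖b i‖) * Real.mul_self_sqrt (hp i hi)
    _ ≤ √(∑ i ∈ s, (√(p i) * ‖b i‖) ^ 2) * √(∑ i ∈ s, (√(p i) * ‖a i‖) ^ 2) :=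
        Real.sum_mul_le_sqrt_mul_sqrt _ _ _
    _ = √((∑ i ∈ s, p i * ‖b i‖ ^ 2) * ∑ i ∈ s, p i * ‖a i‖ ^ 2) := by
        rw [sum_congr rfl (hsq b), sum_congr rfl (hsq a), 
          ← Real.sqrt_mul (sum_nonneg fun i hi => mul_nonneg (hp i hi) (sq_nonneg _))]

end Weighted

theorem stmt_16_general (n : ℕ) (a b : Fin n → ℂ) (p : Fin n → ℝ)
    (hp : ∀ k, 0 ≤ p k) (r : ℝ)
    (h1 : ∑ i, p i * ‖b i - (starRingEnd ℂ) (a i)‖ ^ 2 ≤ r ^ 2) :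
    0 ≤ ((∑ i, p i * ‖b i‖ ^ 2) * (∑ i, p i * ‖a i‖ ^ 2)) ^ ((1 : ℝ) / 2)
        - ‖∑ i, (p i : ℂ) * a i * b i‖
    ∧ ((∑ i, p i * ‖b i‖ ^ 2) * (∑ i, p i * ‖a i‖ ^ 2)) ^ ((1 : ℝ) / 2)
        - ‖∑ i, (p i : ℂ) * a i * b i‖
      ≤ ((∑ i, p i * ‖b i‖ ^ 2) * (∑ i, p i * ‖a i‖ ^ 2)) ^ ((1 : ℝ) / 2)
        - |∑ i, p i * (a i * b i).re|
    ∧ ((∑ i, p i * ‖b i‖ ^ 2) * (∑ i, p i * ‖a i‖ ^ 2)) ^ ((1 : ℝ) / 2)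
        - |∑ i, p i * (a i * b i).re|
      ≤ ((∑ i, p i * ‖b i‖ ^ 2) * (∑ i, p i * ‖a i‖ ^ 2)) ^ ((1 : ℝ) / 2)
        - ∑ i, p i * (a i * b i).re
    ∧ ((∑ i, p i * ‖b i‖ ^ 2) * (∑ i, p i * ‖a i‖ ^ 2)) ^ ((1 : ℝ) / 2)
        - ∑ i, p i * (a i * b i).re
      ≤ (1 / 2) * r ^ 2 := by
  rw [sum_mul_norm_sub_conj_sq] at h1
  rw [← Real.sqrt_eq_rpow]
  have cauchy_schwarz := norm_sum_ofReal_mul_mul_le_sqrt univ a b fun i _ => hp i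
  have re_le_norm : |∑ i, p i * (a i * b i).re| ≤ ‖∑ i, (p i : ℂ) * a i * b i‖ :=
    re_sum_ofReal_mul_mul univ a b ▸ Complex.abs_re_le_norm _
  set B := ∑ i, p i * ‖b i‖ ^ 2
  set A := ∑ i, p i * ‖a i‖ ^ 2
  have hB : 0 ≤ B := sum_nonneg fun i _ => mul_nonneg (hp i) (sq_nonneg _)
  have hA : 0 ≤ A := sum_nonneg fun i _ => mul_nonneg (hp i) (sq_nonneg _)
  have am_gm : √(B * A) ≤ (B + A) / 2 :=
    Real.sqrt_le_iff.2 ⟨by positivity, by nlinarith [sq_nonneg (B - A)]⟩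
  exact ⟨by linarith, by linarith, by linarith [le_abs_self (∑ i, p i * (a i * b i).re)],
    by linarith⟩

theorem stmt_16 (n : ℕ) (hn : 0 < n) (a b : Fin n → ℂ) (p : Fin n → ℝ)
    (hp : ∀ k, 0 ≤ p k) (hp1 : ∑ i, p i = 1) (r : ℝ) (hr : 0 < r)
    (h1 : ∑ i, p i * ‖b i - (starRingEnd ℂ) (a i)‖ ^ 2 ≤ r ^ 2) :
    0 ≤ ((∑ i, p i * ‖b i‖ ^ 2) * (∑ i, p i * ‖a i‖ ^ 2)) ^ ((1 : ℝ) / 2)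
        - ‖∑ i, (p i : ℂ) * a i * b i‖
    ∧ ((∑ i, p i * ‖b i‖ ^ 2) * (∑ i, p i * ‖a i‖ ^ 2)) ^ ((1 : ℝ) / 2)
        - ‖∑ i, (p i : ℂ) * a i * b i‖
      ≤ ((∑ i, p i * ‖b i‖ ^ 2) * (∑ i, p i * ‖a i‖ ^ 2)) ^ ((1 : ℝ) / 2)
        - |∑ i, p i * (a i * b i).re|
    ∧ ((∑ i, p i * ‖b i‖ ^ 2) * (∑ i, p i * ‖a i‖ ^ 2)) ^ ((1 : ℝ) / 2)
        - |∑ i, p i * (a i * b i).re|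
      ≤ ((∑ i, p i * ‖b i‖ ^ 2) * (∑ i, p i * ‖a i‖ ^ 2)) ^ ((1 : ℝ) / 2)
        - ∑ i, p i * (a i * b i).re
    ∧ ((∑ i, p i * ‖b i‖ ^ 2) * (∑ i, p i * ‖a i‖ ^ 2)) ^ ((1 : ℝ) / 2)
        - ∑ i, p i * (a i * b i).re
      ≤ (1 / 2) * r ^ 2 :=
  stmt_16_general n a b p hp r h1
end

section
/- (Pólya–Szegő inequality) Let n be a positive integer and a = (a_1,...,a_n), b = (b_1,...,b_n) be n-tuples of positive real numbers such that there exist positive constants m_1 ≤ M_1 and m_2 ≤ M_2 with m_1 ≤ a_i ≤ M_1 and m_2 ≤ b_i ≤ M_2 for each i ∈ {1,...,n}. Then (∑_{k=1}^n a_k^2)(∑_{k=1}^n b_k^2) / (∑_{k=1}^n a_k b_k)^2 ≤ (1/4) ( sqrt(M_1 M_2/(m_1 m_2)) + sqrt(m_1 m_2/(M_1 M_2)) )^2. -/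
theorem stmt_18 (n : ℕ) (hn : 0 < n) (a b : Fin n → ℝ)
    (m₁ M₁ m₂ M₂ : ℝ) (hm₁ : 0 < m₁) (hm₂ : 0 < m₂)
    (hM₁ : m₁ ≤ M₁) (hM₂ : m₂ ≤ M₂)
    (ha : ∀ i, m₁ ≤ a i ∧ a i ≤ M₁) (hb : ∀ i, m₂ ≤ b i ∧ b i ≤ M₂) :
    (∑ k, a k ^ 2) * (∑ k, b k ^ 2) / (∑ k, a k * b k) ^ 2
      ≤ (1 / 4) * (Real.sqrt (M₁ * M₂ / (m₁ * m₂)) + Real.sqrt (m₁ * m₂ / (M₁ * M₂))) ^ 2 := by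
  have hM₁' : 0 < M₁ := lt_of_lt_of_le hm₁ hM₁
  have hM₂' : 0 < M₂ := lt_of_lt_of_le hm₂ hM₂
  set c : ℝ := m₁ / M₂ with hc
  set C : ℝ := M₁ / m₂ with hC
  have hcpos : 0 < c := div_pos hm₁ hM₂'
  have hCpos : 0 < C := div_pos hM₁' hm₂
  set A := ∑ k, a k ^ 2 with hA
  set B := ∑ k, b k ^ 2 with hB
  set S := ∑ k, a k * b k with hS
  have hne : (Finset.univ : Finset (Fin n)).Nonempty := by
    simpa [Finset.univ_nonempty_iff, Fin.pos_iff_nonempty] using hn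
  have hSpos : 0 < S := Finset.sum_pos (fun k _ => mul_pos (lt_of_lt_of_le hm₁ (ha k).1)
    (lt_of_lt_of_le hm₂ (hb k).1)) hne
  have hApos : 0 < A := Finset.sum_pos (fun k _ => pow_pos (lt_of_lt_of_le hm₁ (ha k).1) 2) hne
  have hBpos : 0 < B := Finset.sum_pos (fun k _ => pow_pos (lt_of_lt_of_le hm₂ (hb k).1) 2) hne
  -- key pointwise inequality summed
  have hkey : A + c * C * B ≤ (c + C) * S := by
    have : ∀ k ∈ (Finset.univ : Finset (Fin n)),
        a k ^ 2 + c * C * b k ^ 2 ≤ (c + C) * (a k * b k) := by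
      intro k _
      have h1 : c * b k ≤ a k := by
        have : c * b k ≤ c * M₂ := by
          exact mul_le_mul_of_nonneg_left (hb k).2 hcpos.le
        have h2 : c * M₂ = m₁ := by rw [hc]; field_simp
        linarith [(ha k).1]
      have h2 : a k ≤ C * b k := by
        have : C * m₂ ≤ C * b k := mul_le_mul_of_nonneg_left (hb k).1 hCpos.le
        have h3 : C * m₂ = M₁ := by rw [hC]; field_simp
        linarith [(ha k).2]
      nlinarith [mul_nonneg (sub_nonneg.mpr h1) (sub_nonneg.mpr h2)]
    calc A + c * C * B = ∑ k, (a k ^ 2 + c * C * b k ^ 2) := by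
          rw [Finset.sum_add_distrib, Finset.mul_sum]
      _ ≤ ∑ k, (c + C) * (a k * b k) := Finset.sum_le_sum this
      _ = (c + C) * S := by rw [Finset.mul_sum]
  -- compute the RHS
  set x := M₁ * M₂ / (m₁ * m₂) with hx
  set y := m₁ * m₂ / (M₁ * M₂) with hy
  have hxpos : 0 < x := by positivity
  have hypos : 0 < y := by positivity
  have hxy : x * y = 1 := by rw [hx, hy]; field_simp
  have hsq : (Real.sqrt x + Real.sqrt y) ^ 2 = x + y + 2 := by
    have h1 : Real.sqrt x * Real.sqrt y = 1 := by
      rw [← Real.sqrt_mul hxpos.le, hxy, Real.sqrt_one]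
    have h2 : Real.sqrt x ^ 2 = x := Real.sq_sqrt hxpos.le
    have h3 : Real.sqrt y ^ 2 = y := Real.sq_sqrt hypos.le
    have : (Real.sqrt x + Real.sqrt y) ^ 2
        = Real.sqrt x ^ 2 + 2 * (Real.sqrt x * Real.sqrt y) + Real.sqrt y ^ 2 := by ring
    rw [this, h1, h2, h3]; ring
  rw [hsq]
  rw [div_le_iff₀ (by positivity)]
  -- need A * B ≤ (1/4)*(x+y+2) * S^2
  have hK : (1 / 4 : ℝ) * (x + y + 2) * (4 * (c * C)) = (c + C) ^ 2 := by
    rw [hx, hy, hc, hC]; field_simp; ring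
  have h4 : 4 * (c * C) * (A * B) ≤ (A + c * C * B) ^ 2 := by
    nlinarith [sq_nonneg (A - c * C * B)]
  have h5 : (A + c * C * B) ^ 2 ≤ ((c + C) * S) ^ 2 :=
    pow_le_pow_left₀ (by positivity) hkey 2
  have hcc : (0:ℝ) < 4 * (c * C) := by positivity
  have h6 : 4 * (c * C) * (A * B) ≤ 4 * (c * C) * (1 / 4 * (x + y + 2) * S ^ 2) := by
    have h7 : ((c + C) * S) ^ 2 = 4 * (c * C) * (1 / 4 * (x + y + 2) * S ^ 2) := by
      rw [mul_pow, ← hK]; ring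
    linarith [h5.trans_eq h7]
  exact le_of_mul_le_mul_left h6 hcc
end
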